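/- arXiv:1710.06115 — 6 statements merged into one kernel-verified Lean document; each statement's English description precedes it below -/
import Mathlib

section
/- Let x ≤ w in S_n (Bruhat order) and set r(p) = rk_x(p) − rk_w(p) ≥ 0. If p, q are points with p < q componentwise (or q < p), r(p) = r(q) = 0, and d_w(p,q) = 0, then d_x(p,q) = 0 and r vanishes at both corner points (i,j') and (i',j), where p = (i,j), q = (i',j'). -/
open Equiv

/-- Rank function: `rk w i j = #{u = 1,...,i : w(u) ≤ j}` (1-based via `Fin`). -/
def rk {n : ℕ} (w : Equiv.Perm (Fin n)) (i j : ℕ) : ℕ :=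
  (Finset.univ.filter (fun u : Fin n => u.val + 1 ≤ i ∧ (w u).val + 1 ≤ j)).card

/-- Coxeter length = number of inversions. -/
def len {n : ℕ} (w : Equiv.Perm (Fin n)) : ℕ :=
  (Finset.univ.filter (fun p : Fin n × Fin n => p.1 < p.2 ∧ w p.2 < w p.1)).card

/-- A transposition. -/
def IsTransposition {n : ℕ} (t : Equiv.Perm (Fin n)) : Prop :=
  ∃ i j : Fin n, i ≠ j ∧ t = Equiv.swap i j

/-- Bruhat order: generated by `x → x·t` for transpositions `t` increasing the length. -/
def bruhatLE {n : ℕ} : Equiv.Perm (Fin n) → Equiv.Perm (Fin n) → Prop :=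
  Relation.ReflTransGen (fun x y => ∃ t, IsTransposition t ∧ y = x * t ∧ len x < len y)

/-- Strict Bruhat order. -/
def bruhatLT {n : ℕ} (x y : Equiv.Perm (Fin n)) : Prop := bruhatLE x y ∧ x ≠ y

/-- Difference function `d_w(p,p')`. -/
def dOf {n : ℕ} (w : Equiv.Perm (Fin n)) (p q : ℕ × ℕ) : ℤ :=
  (rk w p.1 p.2 : ℤ) + rk w q.1 q.2 - rk w p.1 q.2 - rk w q.1 p.2

/-- Strictly comparable points: `(i'−i)(j'−j) > 0`. -/
def SCmp (p q : ℕ × ℕ) : Prop := (p.1 < q.1 ∧ p.2 < q.2) ∨ (q.1 < p.1 ∧ q.2 < p.2)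

/-- Corners of the rectangle spanned by `p`, `q`. -/
def corners (p q : ℕ × ℕ) : Set (ℕ × ℕ) := {(p.1, q.2), (q.1, p.2)}

/-!
Each rank function is submodular, `rk(i,j') + rk(i',j) ≤ rk(i,j) + rk(i',j')`, so `d_x(p,q) ≥ 0`,
and rank functions decrease along Bruhat order, so `r ≥ 0`. Since
`d_x(p,q) - d_w(p,q) = r(p) + r(q) - r(i,j') - r(i',j)`, the hypotheses force all these
nonnegative quantities to vanish.

A length-increasing step `z → z (a b)` with `a < b` has `z a < z b`, and such a step only lowers
ranks. The first point holds because the number of non-inversions of `z` is `∑ᵥ rk_z(v, z v)`, a sum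
that the step changes by at most the submodularity defect of `rk_z` at `(a, z a)`, `(b, z b)`.
-/

open Finset

theorem Fintype.sum_apply_swap_add {α M : Type*} [Fintype α] [DecidableEq α] [AddCommMonoid M]
    (G : α → α → M) {a b : α} (hab : a ≠ b) :
    ∑ u, G u (swap a b u) + (G a a + G b b) = ∑ u, G u u + (G a b + G b a) := by
  have hrest : ∑ u ∈ univ \ {a, b}, G u (swap a b u) = ∑ u ∈ univ \ {a, b}, G u u :=
    Finset.sum_congr rfl fun u hu => by
      simp only [mem_sdiff, mem_univ, mem_insert, mem_singleton, not_or, true_and] at hu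
      rw [swap_apply_of_ne_of_ne hu.1 hu.2]
  rw [← sum_sdiff (subset_univ {a, b}), ← sum_sdiff (subset_univ {a, b}),
    sum_pair hab, sum_pair hab, hrest, swap_apply_left, swap_apply_right]
  abel

section Rank

variable {n : ℕ}

theorem rk_eq_sum (w : Perm (Fin n)) (i j : ℕ) :
    rk w i j = ∑ u, if u.val + 1 ≤ i ∧ (w u).val + 1 ≤ j then 1 else 0 :=
  card_filter _ _

theorem rk_add_rk_le_of_le (x : Perm (Fin n)) {i j i' j' : ℕ} (hi : i ≤ i') (hj : j ≤ j') :
    rk x i j' + rk x i' j ≤ rk x i' j' + rk x i j := by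
  set A := univ.filter fun u : Fin n => u.val + 1 ≤ i ∧ (x u).val + 1 ≤ j'
  set B := univ.filter fun u : Fin n => u.val + 1 ≤ i' ∧ (x u).val + 1 ≤ j
  have hunion : A ∪ B ⊆ univ.filter fun u : Fin n => u.val + 1 ≤ i' ∧ (x u).val + 1 ≤ j' := by
    intro u hu
    simp only [A, B, mem_union, mem_filter, mem_univ, true_and] at hu ⊢
    omega
  have hinter : A ∩ B ⊆ univ.filter fun u : Fin n => u.val + 1 ≤ i ∧ (x u).val + 1 ≤ j := by
    intro u hu
    simp only [A, B, mem_inter, mem_filter, mem_univ, true_and] at hu ⊢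
    omega
  calc A.card + B.card = (A ∪ B).card + (A ∩ B).card := (card_union_add_card_inter A B).symm
    _ ≤ _ := add_le_add (card_le_card hunion) (card_le_card hinter)

theorem dOf_nonneg (x : Perm (Fin n)) {p q : ℕ × ℕ} (h : SCmp p q) : 0 ≤ dOf x p q := by
  unfold dOf
  rcases h with ⟨h1, h2⟩ | ⟨h1, h2⟩ <;>
  · have := rk_add_rk_le_of_le x h1.le h2.le
    omega

theorem rk_mul_swap_le {z : Perm (Fin n)} {a b : Fin n} (hab : a < b) (hz : z a < z b) (i j : ℕ) :
    rk (z * swap a b) i j ≤ rk z i j := by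
  have hswap := Fintype.sum_apply_swap_add
    (fun u v => if u.val + 1 ≤ i ∧ (z v).val + 1 ≤ j then 1 else 0) hab.ne
  have hab' : a.val < b.val := hab
  have hz' : (z a).val < (z b).val := hz
  -- rearrangement inequality for the antitone indicators `[· < i]` and `[· < j]`
  have hcross : (if a.val + 1 ≤ i ∧ (z b).val + 1 ≤ j then 1 else 0) +
      (if b.val + 1 ≤ i ∧ (z a).val + 1 ≤ j then 1 else 0) ≤
      (if a.val + 1 ≤ i ∧ (z a).val + 1 ≤ j then 1 else 0) +
      (if b.val + 1 ≤ i ∧ (z b).val + 1 ≤ j then 1 else 0) := by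
    split_ifs <;> omega
  rw [rk_eq_sum, rk_eq_sum]
  exact le_of_add_le_add_right (hswap.le.trans (Nat.add_le_add_left hcross _))

theorem len_add_sum_rk_diag (w : Perm (Fin n)) :
    len w + ∑ v : Fin n, rk w v (w v) = (univ.filter fun p : Fin n × Fin n => p.1 < p.2).card := by
  have hnoninv : ∑ v : Fin n, rk w v (w v) =
      (univ.filter fun p : Fin n × Fin n => p.1 < p.2 ∧ w p.1 < w p.2).card := by
    rw [card_filter, Fintype.sum_prod_type_right]
    refine sum_congr rfl fun v _ => ?_
    rw [rk_eq_sum]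
    refine sum_congr rfl fun u _ => ?_
    simp only [Fin.lt_def, Nat.succ_le_iff]
  rw [hnoninv, len, ← card_filter_add_card_filter_not
    (s := univ.filter fun p : Fin n × Fin n => p.1 < p.2) (fun p => w p.2 < w p.1),
    filter_filter, filter_filter]
  congr 2
  ext p
  simp only [mem_filter, mem_univ, true_and, not_lt]
  exact and_congr_right fun hp => ⟨le_of_lt, fun h => h.lt_of_ne (w.injective.ne hp.ne)⟩

theorem len_le_len_mul_swap {y : Perm (Fin n)} {a b : Fin n} (hab : a < b) (hy : y a < y b) :
    len y ≤ len (y * swap a b) := by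
  have hdiag := len_add_sum_rk_diag y
  have hdiag' := len_add_sum_rk_diag (y * swap a b)
  have hmono : ∑ v : Fin n, rk (y * swap a b) v ((y * swap a b) v) ≤
      ∑ v : Fin n, rk y v (y (swap a b v)) :=
    sum_le_sum fun v _ => rk_mul_swap_le hab hy _ _
  have hswap := Fintype.sum_apply_swap_add (fun u v : Fin n => rk y u (y v)) hab.ne
  have hsub := rk_add_rk_le_of_le y (i := a) (i' := b) (j := y a) (j' := y b) hab.le hy.le
  omega

theorem apply_lt_apply_of_len_lt_len_mul_swap {z : Perm (Fin n)} {a b : Fin n} (hab : a < b)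
    (hlen : len z < len (z * swap a b)) : z a < z b := by
  by_contra! h
  have hlt : (z * swap a b) a < (z * swap a b) b := by
    simpa only [Perm.mul_apply, swap_apply_left, swap_apply_right] using
      h.lt_of_ne (z.injective.ne hab.ne')
  have := len_le_len_mul_swap hab hlt
  rw [mul_assoc, swap_mul_self, mul_one] at this
  omega

theorem rk_mul_swap_le_of_len_lt {z : Perm (Fin n)} {a b : Fin n} (hab : a ≠ b)
    (hlen : len z < len (z * swap a b)) (i j : ℕ) : rk (z * swap a b) i j ≤ rk z i j := by
  rcases hab.lt_or_gt with hab | hba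
  · exact rk_mul_swap_le hab (apply_lt_apply_of_len_lt_len_mul_swap hab hlen) i j
  · rw [swap_comm] at hlen ⊢
    exact rk_mul_swap_le hba (apply_lt_apply_of_len_lt_len_mul_swap hba hlen) i j

theorem rk_le_rk_of_bruhatLE {x w : Perm (Fin n)} (h : bruhatLE x w) (i j : ℕ) :
    rk w i j ≤ rk x i j := by
  induction h with
  | refl => exact le_rfl
  | tail _ hstep ih =>
    obtain ⟨t, ⟨a, b, hab, rfl⟩, rfl, hlen⟩ := hstep
    exact (rk_mul_swap_le_of_len_lt hab hlen i j).trans ih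

end Rank

theorem stmt2_general (n : ℕ) (x w : Equiv.Perm (Fin n)) (hxw : bruhatLE x w)
    (i j i' j' : ℕ)
    (hcmp : SCmp (i, j) (i', j'))
    (hp : rk x i j = rk w i j) (hq : rk x i' j' = rk w i' j')
    (hd : dOf w (i, j) (i', j') = 0) :
    dOf x (i, j) (i', j') = 0 ∧ rk x i j' = rk w i j' ∧ rk x i' j = rk w i' j := by
  have hcorner := rk_le_rk_of_bruhatLE hxw i j'
  have hcorner' := rk_le_rk_of_bruhatLE hxw i' j
  have hnonneg := dOf_nonneg x hcmp
  simp only [dOf] at hd hnonneg ⊢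
  omega

theorem stmt2 (n : ℕ) (x w : Equiv.Perm (Fin n)) (hxw : bruhatLE x w)
    (i j i' j' : ℕ) (hin : i ≤ n) (hjn : j ≤ n) (hin' : i' ≤ n) (hjn' : j' ≤ n)
    (hcmp : SCmp (i, j) (i', j'))
    (hp : rk x i j = rk w i j) (hq : rk x i' j' = rk w i' j')
    (hd : dOf w (i, j) (i', j') = 0) :
    dOf x (i, j) (i', j') = 0 ∧ rk x i j' = rk w i j' ∧ rk x i' j = rk w i' j :=
  stmt2_general n x w hxw i j i' j' hcmp hp hq hd
end

section
/- Let x ≤ w in S_n and suppose indices i < j < k < l satisfy x(j) < x(i) < x(l) < x(k). If x < x·t_{i,k} ≤ w and x < x·t_{j,l} ≤ w, then x < x·t_{i,l} ≤ w. -/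
open Equiv

/-!
By Ehresmann's criterion, `u ≤ w` in Bruhat order iff `rk w ≤ rk u` entrywise. For `a < b` with
`u a < u b`, right multiplication by `swap a b` lowers the rank matrix by one exactly on the
rectangle `(a, b] × (u a, u b]`. When `x j < x i < x l < x k`, the rectangle of `swap i l` lies in
the union of those of `swap i k` and `swap j l`, so the rank bounds that `w` satisfies against
`x * swap i k` and `x * swap j l` give the bound against `x * swap i l`.
-/

open Finset

section Rank

variable {n : ℕ}

lemma rk_eq_card (u : Perm (Fin n)) (i c : ℕ) :
    rk u i c = #{v : Fin n | (v : ℕ) < i ∧ (u v : ℕ) < c} := by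
  simp only [rk, Nat.succ_le_iff]

lemma rk_eq_of_forall_lt_eq (u w : Perm (Fin n)) {i : ℕ}
    (h : ∀ v : Fin n, (v : ℕ) < i → u v = w v) (c : ℕ) : rk u i c = rk w i c := by
  simp only [rk_eq_card]
  congr 1
  refine filter_congr fun v _ => ?_
  constructor <;> rintro ⟨hv, hc⟩ <;> simp_all

lemma rk_succ (u : Perm (Fin n)) (p : Fin n) (c : ℕ) :
    rk u (p + 1 : ℕ) c = rk u p c + if (u p : ℕ) < c then 1 else 0 := by
  simp only [rk_eq_card, card_filter]
  rw [← sum_erase_add _ _ (mem_univ p), ← sum_erase_add _ _ (mem_univ p), add_assoc]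
  congr 1
  · refine sum_congr rfl fun v hv => ?_
    have hvp : (v : ℕ) ≠ p := Fin.val_ne_of_ne (ne_of_mem_erase hv)
    split_ifs <;> omega
  · split_ifs <;> omega

lemma rk_add_card_window (u : Perm (Fin n)) (i : ℕ) {c d : ℕ} (hcd : c ≤ d) :
    rk u i d = rk u i c + #{v : Fin n | (v : ℕ) < i ∧ c ≤ (u v : ℕ) ∧ (u v : ℕ) < d} := by
  simp only [rk_eq_card, card_filter, ← sum_add_distrib]
  refine sum_congr rfl fun v _ => ?_
  split_ifs <;> omega

lemma rk_mul_swap_add (u : Perm (Fin n)) {a b : Fin n} (hab : a < b) (hu : u a < u b) (i c : ℕ) :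
    rk (u * swap a b) i c
      + (if (a : ℕ) < i ∧ i ≤ b ∧ (u a : ℕ) < c ∧ c ≤ u b then 1 else 0) = rk u i c := by
  have hab' : (a : ℕ) < b := hab
  have hu' : (u a : ℕ) < u b := hu
  have hb : b ∈ univ.erase a := mem_erase.2 ⟨hab.ne', mem_univ b⟩
  simp only [rk_eq_card, card_filter]
  rw [← Equiv.sum_comp (swap a b)]
  simp only [Perm.mul_apply, swap_apply_self]
  rw [← sum_erase_add _ _ (mem_univ a), ← sum_erase_add _ _ hb,
    ← sum_erase_add _ _ (mem_univ a), ← sum_erase_add _ _ hb]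
  have hrest : ∑ v ∈ (univ.erase a).erase b,
      (if ((swap a b v : Fin n) : ℕ) < i ∧ (u v : ℕ) < c then 1 else 0)
      = ∑ v ∈ (univ.erase a).erase b, (if (v : ℕ) < i ∧ (u v : ℕ) < c then 1 else 0) := by
    refine sum_congr rfl fun v hv => ?_
    obtain ⟨hvb, hva, -⟩ := mem_erase.1 hv |>.imp_right mem_erase.1
    rw [swap_apply_of_ne_of_ne hva hvb]
  rw [hrest, swap_apply_left, swap_apply_right]
  split_ifs <;> omega

end Rank

section Length

variable {n : ℕ}

def inversions (u : Perm (Fin n)) : Finset (Fin n × Fin n) :=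
  {p | p.1 < p.2 ∧ u p.2 < u p.1}

lemma mem_inversions {u : Perm (Fin n)} {p : Fin n × Fin n} :
    p ∈ inversions u ↔ p.1 < p.2 ∧ u p.2 < u p.1 := by
  simp [inversions]

lemma lt_of_swap_lt_swap (u : Perm (Fin n)) {a b p q : Fin n} (hab : a < b) (hu : u a < u b)
    (hpq : p < q) (hinv : u q < u p) (hrev : swap a b q < swap a b p) :
    u (swap a b q) < u (swap a b p) := by
  rw [swap_apply_def, swap_apply_def] at *
  split_ifs at * <;> subst_vars <;> simp only [Fin.lt_def, lt_self_iff_false] at * <;> omega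

lemma len_le (u : Perm (Fin n)) : len u ≤ n * n :=
  (card_le_univ (inversions u)).trans_eq (by simp)

/-- Conjugating by `swap a b` (and keeping pairs it would disorder) injects the inversions of `u`
into those of `u * swap a b` other than `(a, b)`. -/
lemma len_lt_len_mul_swap (u : Perm (Fin n)) {a b : Fin n} (hab : a < b) (hu : u a < u b) :
    len u < len (u * swap a b) := by
  set σ := swap a b
  let ψ : Fin n × Fin n → Fin n × Fin n := fun p => if σ p.1 < σ p.2 then (σ p.1, σ p.2) else p
  have hψψ : ∀ p : Fin n × Fin n, p.1 < p.2 → ψ (ψ p) = p := by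
    rintro ⟨p, q⟩ hpq
    by_cases h : σ p < σ q <;> simp [ψ, σ, h, hpq]
  have hmaps : ∀ p ∈ inversions u, ψ p ∈ (inversions (u * σ)).erase (a, b) := by
    rintro ⟨p, q⟩ hp
    rw [mem_inversions] at hp
    rw [mem_erase, mem_inversions]
    by_cases h : σ p < σ q
    · simp only [ψ, if_pos h, Perm.mul_apply, σ, swap_apply_self, ne_eq, Prod.mk.injEq]
      refine ⟨?_, h, hp.2⟩
      rintro ⟨hpa, hqb⟩
      rw [swap_apply_eq_iff, swap_apply_left] at hpa
      rw [swap_apply_eq_iff, swap_apply_right] at hqb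
      subst hpa hqb
      exact lt_asymm hab hp.1
    · simp only [ψ, if_neg h, Perm.mul_apply, ne_eq, Prod.mk.injEq]
      refine ⟨?_, hp.1, lt_of_swap_lt_swap u hab hu hp.1 hp.2 ?_⟩
      · rintro ⟨rfl, rfl⟩
        exact lt_asymm hu hp.2
      · exact lt_of_le_of_ne (not_lt.1 h) (σ.injective.ne hp.1.ne')
  calc len u = #(inversions u) := rfl
    _ ≤ #((inversions (u * σ)).erase (a, b)) :=
        card_le_card_of_injOn ψ hmaps fun p hp q hq hpq => by
          rw [← hψψ p (mem_inversions.1 hp).1, hpq, hψψ q (mem_inversions.1 hq).1]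
    _ < #(inversions (u * σ)) := card_erase_lt_of_mem <| by
        simpa [mem_inversions, σ] using ⟨hab, hu⟩
    _ = len (u * σ) := rfl

end Length

section RankCriterion

variable {n : ℕ}

lemma lt_of_len_lt_len_mul_swap (u : Perm (Fin n)) {a b : Fin n} (hab : a < b)
    (hlen : len u < len (u * swap a b)) : u a < u b := by
  by_contra! h
  have hlt := len_lt_len_mul_swap (u * swap a b) hab <| by
    simpa using lt_of_le_of_ne h (u.injective.ne hab.ne')
  rw [mul_assoc, swap_mul_self, mul_one] at hlt
  exact lt_asymm hlen hlt

lemma rk_le_of_bruhatLE {u w : Perm (Fin n)} (h : bruhatLE u w) (i c : ℕ) :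
    rk w i c ≤ rk u i c := by
  induction h with
  | refl => exact le_rfl
  | tail _ hstep ih =>
    obtain ⟨t, ⟨p, q, hpq, rfl⟩, rfl, hlen⟩ := hstep
    refine le_trans ?_ ih
    rcases hpq.lt_or_gt with hpq | hqp
    · exact Nat.le.intro (rk_mul_swap_add _ hpq (lt_of_len_lt_len_mul_swap _ hpq hlen) i c)
    · rw [swap_comm] at hlen ⊢
      exact Nat.le.intro (rk_mul_swap_add _ hqp (lt_of_len_lt_len_mul_swap _ hqp hlen) i c)

/-- Below row `i`, every `u`-value in `[c, w a]` sits at a position before `a`, where `u` and `w`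
agree, while `w a` itself is missed by `u`; so `u` has fewer values in that window than `w`. -/
lemma rk_lt_of_first_difference {u w : Perm (Fin n)} (hrk : ∀ i c, rk w i c ≤ rk u i c)
    {a b : Fin n} (hpre : ∀ v < a, u v = w v) (hbw : u b ≤ w a)
    (hbmin : ∀ v, a < v → v < b → u a < u v → w a < u v)
    {i c : ℕ} (hai : (a : ℕ) < i) (hib : i ≤ b) (hac : (u a : ℕ) < c) (hcb : c ≤ u b) :
    rk w i c < rk u i c := by
  have hbw' : (u b : ℕ) ≤ w a := hbw
  set d := (w a : ℕ) + 1
  have hcd : c ≤ d := by omega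
  have ha : a ∈ ({v : Fin n | (v : ℕ) < i ∧ c ≤ w v ∧ (w v : ℕ) < d} : Finset _) := by
    simp only [mem_filter, mem_univ, true_and]
    omega
  have hwin : ({v : Fin n | (v : ℕ) < i ∧ c ≤ u v ∧ (u v : ℕ) < d} : Finset _) ⊆
      ({v : Fin n | (v : ℕ) < i ∧ c ≤ w v ∧ (w v : ℕ) < d} : Finset _).erase a := by
    intro v hv
    simp only [mem_filter, mem_univ, true_and, mem_erase] at hv ⊢
    have hva : v < a := by
      by_contra! hav
      rcases hav.lt_or_eq with hav | rfl
      · have := hbmin v hav (by rw [Fin.lt_def]; omega) (by rw [Fin.lt_def]; omega)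
        rw [Fin.lt_def] at this
        omega
      · omega
    rw [← hpre v hva]
    exact ⟨hva.ne, hv⟩
  have hcard := card_le_card hwin
  rw [card_erase_of_mem ha] at hcard
  have hpos := card_pos.2 ⟨a, ha⟩
  have := rk_add_card_window u i hcd
  have := rk_add_card_window w i hcd
  have := hrk i d
  omega

lemma exists_swap_rk_le_of_ne {u w : Perm (Fin n)} (hne : u ≠ w)
    (hrk : ∀ i c, rk w i c ≤ rk u i c) :
    ∃ a b : Fin n, a < b ∧ u a < u b ∧ ∀ i c, rk w i c ≤ rk (u * swap a b) i c := by
  obtain ⟨a, ha, hpre⟩ : ∃ a, u a ≠ w a ∧ ∀ v < a, u v = w v := by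
    obtain ⟨v, hv⟩ := DFunLike.ne_iff.1 hne
    obtain ⟨a, ha, hmin⟩ := wellFounded_lt.has_min {v | u v ≠ w v} ⟨v, hv⟩
    exact ⟨a, ha, fun v hv => not_not.1 fun h => hmin v h hv⟩
  have huwa : u a < w a := by
    have h := hrk (a + 1) (w a + 1)
    rw [rk_succ, rk_succ, rk_eq_of_forall_lt_eq u w fun v hv => hpre v hv] at h
    have : (u a : ℕ) ≠ w a := Fin.val_ne_of_ne ha
    rw [Fin.lt_def]
    split_ifs at h <;> omega
  obtain ⟨b, ⟨hab, hub, hbw⟩, hbmin⟩ :=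
    wellFounded_lt.has_min {v | a < v ∧ u a < u v ∧ u v ≤ w a} ⟨u.symm (w a), by
      have hne : u.symm (w a) ≠ a := fun h => ha (u.symm_apply_eq.1 h).symm
      refine ⟨lt_of_le_of_ne (not_lt.1 fun hlt => hne ?_) hne.symm, by simpa using huwa, by simp⟩
      exact w.injective (by rw [← hpre _ hlt, apply_symm_apply])⟩
  refine ⟨a, b, hab, hub, fun i c => ?_⟩
  have hswap := rk_mul_swap_add u hab hub i c
  split_ifs at hswap with hR
  · have := rk_lt_of_first_difference hrk hpre hbw
      (fun v hav hvb hav' => not_le.1 fun h => hbmin v ⟨hav, hav', h⟩ hvb)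
      hR.1 hR.2.1 hR.2.2.1 hR.2.2.2
    omega
  · have := hrk i c
    omega

theorem bruhatLE_of_rk_le {u w : Perm (Fin n)} (hrk : ∀ i c, rk w i c ≤ rk u i c) :
    bruhatLE u w := by
  by_cases hne : u = w
  · exact hne ▸ .refl
  obtain ⟨a, b, hab, hu, hrk'⟩ := exists_swap_rk_le_of_ne hne hrk
  have hlen := len_lt_len_mul_swap u hab hu
  have hbound := len_le (u * swap a b)
  exact .head ⟨swap a b, ⟨a, b, hab.ne, rfl⟩, rfl, hlen⟩ (bruhatLE_of_rk_le hrk')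
termination_by n * n - len u

end RankCriterion

theorem stmt6_general (n : ℕ) (x w : Equiv.Perm (Fin n))
    (i j k l : Fin n) (hij : i < j) (hjk : j < k) (hkl : k < l)
    (h1 : x j < x i) (h2 : x i < x l) (h3 : x l < x k)
    (hik : bruhatLT x (x * Equiv.swap i k) ∧ bruhatLE (x * Equiv.swap i k) w)
    (hjl : bruhatLT x (x * Equiv.swap j l) ∧ bruhatLE (x * Equiv.swap j l) w) :
    bruhatLT x (x * Equiv.swap i l) ∧ bruhatLE (x * Equiv.swap i l) w := by
  have hil : i < l := hij.trans (hjk.trans hkl)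
  refine ⟨⟨.single ⟨swap i l, ⟨i, l, hil.ne, rfl⟩, rfl, len_lt_len_mul_swap x hil h2⟩, ?_⟩, ?_⟩
  · simpa [eq_comm (a := x)] using hil.ne
  · refine bruhatLE_of_rk_le fun p c => ?_
    have e_il := rk_mul_swap_add x hil h2 p c
    have e_ik := rk_mul_swap_add x (hij.trans hjk) (h2.trans h3) p c
    have e_jl := rk_mul_swap_add x (hjk.trans hkl) (h1.trans h2) p c
    have := rk_le_of_bruhatLE hik.2 p c
    have := rk_le_of_bruhatLE hjl.2 p c
    simp only [Fin.lt_def] at hij hjk hkl h1 h2 h3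
    split_ifs at e_il e_ik e_jl <;> omega

theorem stmt6 (n : ℕ) (x w : Equiv.Perm (Fin n)) (hxw : bruhatLE x w)
    (i j k l : Fin n) (hij : i < j) (hjk : j < k) (hkl : k < l)
    (h1 : x j < x i) (h2 : x i < x l) (h3 : x l < x k)
    (hik : bruhatLT x (x * Equiv.swap i k) ∧ bruhatLE (x * Equiv.swap i k) w)
    (hjl : bruhatLT x (x * Equiv.swap j l) ∧ bruhatLE (x * Equiv.swap j l) w) :
    bruhatLT x (x * Equiv.swap i l) ∧ bruhatLE (x * Equiv.swap i l) w :=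
  stmt6_general n x w i j k l hij hjk hkl h1 h2 h3 hik hjl
end

section
/- Let w, y ∈ S_n and A, B ⊆ {0,...,n}². Suppose rk_y = rk_w on A and rk_y ≥ rk_w on B. Let C_A^w(B) = B ∪ {p : ∃ p' ∈ A with p and p' strictly comparable (both coordinates strictly ordered in the same direction), d_w(p,p') = 0, and both corners of the rectangle spanned by p, p' lie in B}. Then rk_y ≥ rk_w on C_A^w(B). -/
open Equiv

lemma rk_submod {n : ℕ} (w : Equiv.Perm (Fin n)) {i i' j j' : ℕ}
    (hi : i ≤ i') (hj : j ≤ j') :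
    rk w i j' + rk w i' j ≤ rk w i' j' + rk w i j := by
  classical
  set S : ℕ → ℕ → Finset (Fin n) :=
    fun a b => Finset.univ.filter (fun u : Fin n => u.val + 1 ≤ a ∧ (w u).val + 1 ≤ b) with hS
  have hu : S i j' ∪ S i' j ⊆ S i' j' := by
    intro u hu
    simp only [hS, Finset.mem_union, Finset.mem_filter] at hu ⊢
    rcases hu with ⟨_, h⟩ | ⟨_, h⟩ <;> exact ⟨Finset.mem_univ u, by omega⟩
  have hi' : S i j' ∩ S i' j = S i j := by
    ext u
    simp only [hS, Finset.mem_inter, Finset.mem_filter, Finset.mem_univ, true_and]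
    omega
  have := Finset.card_union_add_card_inter (S i j') (S i' j)
  have hle := Finset.card_le_card hu
  rw [hi'] at this
  show (S i j').card + (S i' j).card ≤ (S i' j').card + (S i j).card
  omega

theorem stmt11 (n : ℕ) (w y : Equiv.Perm (Fin n)) (A B : Set (ℕ × ℕ))
    (hA : A ⊆ {p | p.1 ≤ n ∧ p.2 ≤ n}) (hB : B ⊆ {p | p.1 ≤ n ∧ p.2 ≤ n})
    (h1 : ∀ p ∈ A, rk y p.1 p.2 = rk w p.1 p.2)
    (h2 : ∀ p ∈ B, rk w p.1 p.2 ≤ rk y p.1 p.2) :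
    ∀ p ∈ B ∪ {p | ∃ p' ∈ A, SCmp p p' ∧ dOf w p p' = 0 ∧ corners p p' ⊆ B},
      rk w p.1 p.2 ≤ rk y p.1 p.2 := by
  rintro p (hp | ⟨q, hqA, hcmp, hd, hcor⟩)
  · exact h2 p hp
  have hc1 : (p.1, q.2) ∈ B := hcor (Or.inl rfl)
  have hc2 : (q.1, p.2) ∈ B := hcor (Or.inr rfl)
  have e1 := h2 _ hc1
  have e2 := h2 _ hc2
  have eq := h1 q hqA
  simp only at e1 e2
  unfold dOf at hd
  rcases hcmp with ⟨ha, hb⟩ | ⟨ha, hb⟩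
  · have := rk_submod y ha.le hb.le
    omega
  · have := rk_submod y ha.le hb.le
    omega
end

section
/- Let w, y ∈ S_n and let A = {p ∈ {0,...,n}² : rk_w(p) = rk_y(p)}. Define the influence set infl^w(A) as the union of the increasing sequence A₀ = A, A_k = C_A^w(A_{k−1}), where C_A^w(B) = B ∪ {p : ∃ p' ∈ A strictly comparable with p, d_w(p,p') = 0, corners(p,p') ⊆ B}. Then rk_y ≥ rk_w on infl^w(A). -/
open Equiv

/-- One step of the influence construction. -/
def cOp {n : ℕ} (w : Equiv.Perm (Fin n)) (A B : Set (ℕ × ℕ)) : Set (ℕ × ℕ) :=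
  B ∪ {p | ∃ p' ∈ A, SCmp p p' ∧ dOf w p p' = 0 ∧ corners p p' ⊆ B}

/-- The influence set of `A`: union of the increasing sequence `A, C_A^w(A), ...`. -/
def infl {n : ℕ} (w : Equiv.Perm (Fin n)) (A : Set (ℕ × ℕ)) : Set (ℕ × ℕ) :=
  ⋃ k : ℕ, (cOp w A)^[k] A

lemma rk_supermodular {n : ℕ} (y : Equiv.Perm (Fin n)) {i j i' j' : ℕ}
    (hi : i ≤ i') (hj : j ≤ j') :
    rk y i j' + rk y i' j ≤ rk y i j + rk y i' j' := by
  classical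
  set A := Finset.univ.filter (fun u : Fin n => u.val + 1 ≤ i ∧ (y u).val + 1 ≤ j') with hA
  set B := Finset.univ.filter (fun u : Fin n => u.val + 1 ≤ i' ∧ (y u).val + 1 ≤ j) with hB
  have hunion : A ∪ B ⊆ Finset.univ.filter
      (fun u : Fin n => u.val + 1 ≤ i' ∧ (y u).val + 1 ≤ j') := by
    intro u hu
    simp only [hA, hB, Finset.mem_union, Finset.mem_filter] at hu ⊢
    rcases hu with ⟨_, h1, h2⟩ | ⟨_, h1, h2⟩
    · exact ⟨Finset.mem_univ _, h1.trans hi, h2⟩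
    · exact ⟨Finset.mem_univ _, h1, h2.trans hj⟩
  have hinter : A ∩ B = Finset.univ.filter
      (fun u : Fin n => u.val + 1 ≤ i ∧ (y u).val + 1 ≤ j) := by
    ext u
    simp only [hA, hB, Finset.mem_inter, Finset.mem_filter, Finset.mem_univ, true_and]
    constructor
    · rintro ⟨⟨h1, _⟩, ⟨_, h4⟩⟩; exact ⟨h1, h4⟩
    · rintro ⟨h1, h2⟩; exact ⟨⟨h1, h2.trans hj⟩, ⟨h1.trans hi, h2⟩⟩
  have hcard := Finset.card_union_add_card_inter A B
  have h1 : (A ∪ B).card ≤ rk y i' j' := Finset.card_le_card hunion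
  have h2 : (A ∩ B).card = rk y i j := by rw [hinter]; rfl
  rw [show rk y i j' = A.card from rfl, show rk y i' j = B.card from rfl, ← h2]
  omega

theorem stmt12 (n : ℕ) (w y : Equiv.Perm (Fin n)) :
    ∀ p ∈ infl w {p : ℕ × ℕ | p.1 ≤ n ∧ p.2 ≤ n ∧ rk w p.1 p.2 = rk y p.1 p.2},
      rk w p.1 p.2 ≤ rk y p.1 p.2 := by
  classical
  intro p hp
  simp only [infl, Set.mem_iUnion] at hp
  obtain ⟨k, hk⟩ := hp
  induction k generalizing p with
  | zero => exact hk.2.2.le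
  | succ k ih =>
    rw [Function.iterate_succ_apply'] at hk
    rcases hk with h | h
    · exact ih p h
    · obtain ⟨q, hqA, hcmp, hd, hcor⟩ := h
      have hc1 : rk w p.1 q.2 ≤ rk y p.1 q.2 := ih _ (hcor (Set.mem_insert _ _))
      have hc2 : rk w q.1 p.2 ≤ rk y q.1 p.2 := ih _ (hcor (by right; rfl))
      have hq : rk w q.1 q.2 = rk y q.1 q.2 := hqA.2.2
      simp only [dOf] at hd
      rcases hcmp with ⟨h1, h2⟩ | ⟨h1, h2⟩
      · have hsup := rk_supermodular y (i := p.1) (i' := q.1) (j := p.2) (j' := q.2)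
          h1.le h2.le
        omega
      · have hsup := rk_supermodular y (i := q.1) (i' := p.1) (j := q.2) (j' := p.2)
          h1.le h2.le
        omega
end

section
/- Let x ≤ w in S_n, t' a transposition with x < x·t' ≤ w, and define φ(t) = t'·t·t' if x·t' < x·t'·(t'tt') ≤ w, and φ(t) = t otherwise, for transpositions t with x·t' < x·t'·t ≤ w. Suppose (w,x) is smooth (i.e., #{t : x < x·t ≤ w} = ℓ(w)−ℓ(x)) and assume t' satisfies x ⋖ x·t' ≤ w. Then for any transposition t ≠ t' with x < x·t ≤ w, at least one of s = t or s = t'·t·t' satisfies x·t' < x·t'·s ≤ w. -/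
open Equiv

namespace S16

variable {n : ℕ}

lemma rk_card (x : Equiv.Perm (Fin n)) (i j : ℕ) :
    rk x i j = ∑ u : Fin n, (if u.val < i ∧ (x u).val < j then 1 else 0) := by
  rw [rk, Finset.card_filter]
  refine Finset.sum_congr rfl fun u _ => ?_
  split_ifs <;> omega

lemma sum_split_two (f : Fin n → ℕ) {c d : Fin n} (h : c ≠ d) :
    ∑ u : Fin n, f u = f c + f d + ∑ u ∈ (Finset.univ.erase c).erase d, f u := by
  rw [← Finset.add_sum_erase _ f (Finset.mem_univ c),
    ← Finset.add_sum_erase _ f (Finset.mem_erase.mpr ⟨h.symm, Finset.mem_univ d⟩)]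
  ring

lemma rk_mul_swap (x : Equiv.Perm (Fin n)) {c d : Fin n} (hcd : c < d) (hv : x c < x d)
    (i j : ℕ) :
    rk x i j = rk (x * Equiv.swap c d) i j +
      (if (c.val < i ∧ i ≤ d.val) ∧ ((x c).val < j ∧ j ≤ (x d).val) then 1 else 0) := by
  have hne : c ≠ d := ne_of_lt hcd
  rw [rk_card, rk_card, sum_split_two _ hne, sum_split_two _ hne]
  have e1 : (x * Equiv.swap c d) c = x d := by simp
  have e2 : (x * Equiv.swap c d) d = x c := by simp
  have e3 : ∑ u ∈ (Finset.univ.erase c).erase d,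
        (if u.val < i ∧ ((x * Equiv.swap c d) u).val < j then 1 else 0)
      = ∑ u ∈ (Finset.univ.erase c).erase d, (if u.val < i ∧ (x u).val < j then 1 else 0) := by
    refine Finset.sum_congr rfl fun u hu => ?_
    rcases Finset.mem_erase.mp hu with ⟨hud, hu'⟩
    rcases Finset.mem_erase.mp hu' with ⟨huc, _⟩
    rw [show (x * Equiv.swap c d) u = x u by
      simp [Equiv.Perm.mul_apply, Equiv.swap_apply_of_ne_of_ne huc hud]]
  rw [e1, e2, e3]
  have h1 : c.val < d.val := hcd
  have h2 : (x c).val < (x d).val := hv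
  split_ifs <;> omega

lemma rk_mul_swap_le (x : Equiv.Perm (Fin n)) {c d : Fin n} (hcd : c < d) (hv : x c < x d)
    (i j : ℕ) : rk (x * Equiv.swap c d) i j ≤ rk x i j := by
  have := rk_mul_swap x hcd hv i j
  split_ifs at this <;> omega

/-- counting positions in `[l, r)` with value `< j`. -/
def cnt (x : Equiv.Perm (Fin n)) (l r j : ℕ) : ℕ :=
  ∑ u : Fin n, (if l ≤ u.val ∧ u.val < r ∧ (x u).val < j then 1 else 0)

lemma rk_eq_cnt (x : Equiv.Perm (Fin n)) (i j : ℕ) : rk x i j = cnt x 0 i j := by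
  rw [rk_card, cnt]
  refine Finset.sum_congr rfl fun u _ => ?_
  split_ifs <;> omega

lemma cnt_split (x : Equiv.Perm (Fin n)) {l m r : ℕ} (h1 : l ≤ m) (h2 : m ≤ r) (j : ℕ) :
    cnt x l r j = cnt x l m j + cnt x m r j := by
  rw [cnt, cnt, cnt, ← Finset.sum_add_distrib]
  refine Finset.sum_congr rfl fun u _ => ?_
  split_ifs <;> omega

lemma rk_split (x : Equiv.Perm (Fin n)) {l k : ℕ} (h : l ≤ k) (j : ℕ) :
    rk x k j = rk x l j + cnt x l k j := by
  rw [rk_eq_cnt, rk_eq_cnt, cnt_split x (Nat.zero_le l) h]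

lemma cnt_mono_j (x : Equiv.Perm (Fin n)) (l r : ℕ) {j j' : ℕ} (h : j ≤ j') :
    cnt x l r j ≤ cnt x l r j' := by
  refine Finset.sum_le_sum fun u _ => ?_
  split_ifs <;> omega

lemma cnt_congr {x w : Equiv.Perm (Fin n)} {l r : ℕ}
    (h : ∀ u : Fin n, l ≤ u.val → u.val < r → x u = w u) (j : ℕ) :
    cnt x l r j = cnt w l r j := by
  refine Finset.sum_congr rfl fun u _ => ?_
  by_cases hb : l ≤ u.val ∧ u.val < r
  · rw [h u hb.1 hb.2]
  · split_ifs <;> omega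

lemma cnt_congr_j {x : Equiv.Perm (Fin n)} {l r j j' : ℕ}
    (h : ∀ u : Fin n, l ≤ u.val → u.val < r → ((x u).val < j ↔ (x u).val < j')) :
    cnt x l r j = cnt x l r j' := by
  refine Finset.sum_congr rfl fun u _ => ?_
  by_cases hb : l ≤ u.val ∧ u.val < r
  · have := h u hb.1 hb.2
    split_ifs <;> omega
  · split_ifs <;> omega

lemma cnt_single {x : Equiv.Perm (Fin n)} (u : Fin n) (j : ℕ) :
    cnt x u.val (u.val + 1) j = if (x u).val < j then 1 else 0 := by
  rw [cnt]
  rw [Finset.sum_eq_single u]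
  · split_ifs <;> omega
  · intro v _ hvu
    have : ¬(u.val ≤ v.val ∧ v.val < u.val + 1) := by
      intro hc
      exact hvu (Fin.ext (by omega))
    split_ifs <;> omega
  · intro h; exact absurd (Finset.mem_univ u) h


lemma rk_decomp (x : Equiv.Perm (Fin n)) (u : Fin n) {k : ℕ} (h : u.val < k) (j : ℕ) :
    rk x k j = rk x u.val j + ((if (x u).val < j then 1 else 0) + cnt x (u.val + 1) k j) := by
  rw [rk_split x (le_of_lt h) j, cnt_split x (Nat.le_add_right u.val 1) h j, ← cnt_single u j]

def invSet (z : Equiv.Perm (Fin n)) : Finset (Fin n × Fin n) :=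
  Finset.univ.filter (fun p => p.1 < p.2 ∧ z p.2 < z p.1)

lemma len_eq_invSet (z : Equiv.Perm (Fin n)) : len z = (invSet z).card := rfl

lemma mem_invSet {z : Equiv.Perm (Fin n)} {p : Fin n × Fin n} :
    p ∈ invSet z ↔ p.1 < p.2 ∧ z p.2 < z p.1 := by
  simp [invSet]

def fmap (c d : Fin n) (p : Fin n × Fin n) : Fin n × Fin n :=
  if (p.1 = c ∧ p.2 < d) ∨ (p.2 = d ∧ c < p.1) then p
  else (Equiv.swap c d p.1, Equiv.swap c d p.2)

section fmap
variable {x : Equiv.Perm (Fin n)} {c d : Fin n}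

lemma fmap_of_st {p : Fin n × Fin n} (h : (p.1 = c ∧ p.2 < d) ∨ (p.2 = d ∧ c < p.1)) :
    fmap c d p = p := by unfold fmap; exact if_pos h

lemma fmap_of_not_st {p : Fin n × Fin n} (h : ¬((p.1 = c ∧ p.2 < d) ∨ (p.2 = d ∧ c < p.1))) :
    fmap c d p = (Equiv.swap c d p.1, Equiv.swap c d p.2) := by unfold fmap; exact if_neg h

lemma fmap_invol (hcd : c < d) (p : Fin n × Fin n) (hp : p.1 < p.2) :
    fmap c d (fmap c d p) = p := by
  rcases p with ⟨u, v⟩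
  simp only at hp
  have hcd' : c ≠ d := ne_of_lt hcd
  by_cases hs : ((u, v).1 = c ∧ (u, v).2 < d) ∨ ((u, v).2 = d ∧ c < (u, v).1)
  · rw [fmap_of_st hs, fmap_of_st hs]
  · rw [fmap_of_not_st hs]
    push_neg at hs
    simp only at hs
    rcases eq_or_ne u c with h | huc
    · replace h := h.symm; subst h
      rcases eq_or_ne v d with h | hvd'
      · replace h := h.symm; subst h
        rw [swap_apply_left, swap_apply_right]
        have h2 : ¬(((d, c).1 = c ∧ (d, c).2 < d) ∨ ((d, c).2 = d ∧ c < (d, c).1)) := by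
          simp only; rintro (⟨h1, _⟩ | ⟨h1, _⟩)
          · exact hcd' h1.symm
          · exact hcd' h1
        rw [fmap_of_not_st h2]
        simp [swap_apply_left, swap_apply_right]
      · have hvc : v ≠ c := ne_of_gt hp
        rw [swap_apply_left, swap_apply_of_ne_of_ne hvc hvd']
        have h2 : ¬(((d, v).1 = c ∧ (d, v).2 < d) ∨ ((d, v).2 = d ∧ c < (d, v).1)) := by
          simp only; rintro (⟨h1, _⟩ | ⟨h1, _⟩)
          · exact hcd' h1.symm
          · exact hvd' h1
        rw [fmap_of_not_st h2]
        simp [swap_apply_left, swap_apply_of_ne_of_ne hvc hvd']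
    · rcases eq_or_ne v d with h | hvd
      · replace h := h.symm; subst h
        have hule : u ≤ c := hs.2 rfl
        have hud : u ≠ d := ne_of_lt hp
        rw [swap_apply_of_ne_of_ne huc hud, swap_apply_right]
        have h2 : ¬(((u, c).1 = c ∧ (u, c).2 < d) ∨ ((u, c).2 = d ∧ c < (u, c).1)) := by
          simp only; rintro (⟨h1, _⟩ | ⟨h1, _⟩)
          · exact huc h1
          · exact hcd' h1
        rw [fmap_of_not_st h2]
        simp [swap_apply_right, swap_apply_of_ne_of_ne huc hud]
      · rcases eq_or_ne u d with h | hud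
        · replace h := h.symm; subst h
          have hvc : v ≠ c := fun h => absurd (h ▸ hp) (not_lt.mpr (le_of_lt hcd))
          rw [swap_apply_right, swap_apply_of_ne_of_ne hvc hvd]
          have h2 : ¬(((c, v).1 = c ∧ (c, v).2 < d) ∨ ((c, v).2 = d ∧ c < (c, v).1)) := by
            simp only; rintro (⟨_, h2⟩ | ⟨h1, _⟩)
            · exact absurd (hp.trans h2) (lt_irrefl d)
            · exact hvd h1
          rw [fmap_of_not_st h2]
          simp [swap_apply_right, swap_apply_of_ne_of_ne hvc hvd]
        · rcases eq_or_ne v c with h | hvc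
          · replace h := h.symm; subst h
            rw [swap_apply_of_ne_of_ne huc hud, swap_apply_left]
            have h2 : ¬(((u, d).1 = c ∧ (u, d).2 < d) ∨ ((u, d).2 = d ∧ c < (u, d).1)) := by
              simp only; rintro (⟨_, h2⟩ | ⟨_, h2⟩)
              · exact absurd h2 (lt_irrefl d)
              · exact absurd (h2.trans hp) (lt_irrefl c)
            rw [fmap_of_not_st h2]
            simp [swap_apply_left, swap_apply_of_ne_of_ne huc hud]
          · rw [swap_apply_of_ne_of_ne huc hud, swap_apply_of_ne_of_ne hvc hvd]
            have h2 : ¬(((u, v).1 = c ∧ (u, v).2 < d) ∨ ((u, v).2 = d ∧ c < (u, v).1)) := by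
              simp only; rintro (⟨h1, _⟩ | ⟨h1, _⟩)
              · exact huc h1
              · exact hvd h1
            rw [fmap_of_not_st h2]
            simp [swap_apply_of_ne_of_ne huc hud, swap_apply_of_ne_of_ne hvc hvd]

lemma fmap_maps_x_y (hcd : c < d) (hv : x c < x d) {p : Fin n × Fin n}
    (hp : p ∈ invSet x) :
    fmap c d p ∈ invSet (x * Equiv.swap c d) ∧ fmap c d p ≠ (c, d) := by
  have yc : (x * Equiv.swap c d) c = x d := by simp
  have yd : (x * Equiv.swap c d) d = x c := by simp
  have yo : ∀ z, (x * Equiv.swap c d) (Equiv.swap c d z) = x z := by intro z; simp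
  rcases p with ⟨u, v⟩
  rw [mem_invSet] at hp
  obtain ⟨huv, hval⟩ := hp
  simp only at huv hval
  have hcd' : c ≠ d := ne_of_lt hcd
  by_cases hs : ((u, v).1 = c ∧ (u, v).2 < d) ∨ ((u, v).2 = d ∧ c < (u, v).1)
  · rw [fmap_of_st hs]
    simp only at hs
    rcases hs with ⟨h, hvd⟩ | ⟨h, hcu⟩
    · replace h := h.symm; subst h
      have hvc : v ≠ c := ne_of_gt huv
      have hvd' : v ≠ d := ne_of_lt hvd
      have hyv : (x * Equiv.swap c d) v = x v := by
        simp [Equiv.Perm.mul_apply, swap_apply_of_ne_of_ne hvc hvd']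
      constructor
      · refine mem_invSet.mpr ⟨huv, ?_⟩
        simp only [hyv, yc]
        exact hval.trans hv
      · simp only [ne_eq, Prod.mk.injEq, not_and]
        intro _; exact hvd'
    · replace h := h.symm; subst h
      have huc : u ≠ c := ne_of_gt hcu
      have hud : u ≠ d := ne_of_lt huv
      have hyu : (x * Equiv.swap c d) u = x u := by
        simp [Equiv.Perm.mul_apply, swap_apply_of_ne_of_ne huc hud]
      constructor
      · refine mem_invSet.mpr ⟨huv, ?_⟩
        simp only [hyu, yd]
        exact hv.trans hval
      · simp only [ne_eq, Prod.mk.injEq, not_and]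
        intro h; exact absurd h huc
  · rw [fmap_of_not_st hs]
    push_neg at hs
    simp only at hs
    have hvalim : (x * Equiv.swap c d) (Equiv.swap c d v) < (x * Equiv.swap c d) (Equiv.swap c d u) := by
      rw [yo, yo]; exact hval
    rcases eq_or_ne u c with h | huc
    · replace h := h.symm; subst h
      rcases eq_or_ne v d with h | hvd'
      · replace h := h.symm; subst h
        exact absurd hval (not_lt.mpr (le_of_lt hv))
      · have hvd : d < v := lt_of_le_of_ne (hs.1 rfl) (Ne.symm hvd')
        have hvc : v ≠ c := ne_of_gt huv
        rw [swap_apply_left, swap_apply_of_ne_of_ne hvc hvd'] at hvalim ⊢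
        constructor
        · exact mem_invSet.mpr ⟨hvd, hvalim⟩
        · simp only [ne_eq, Prod.mk.injEq, not_and]
          intro h; exact absurd h.symm hcd'
    · rcases eq_or_ne v d with h | hvd
      · replace h := h.symm; subst h
        have hulc : u < c := lt_of_le_of_ne (hs.2 rfl) huc
        have hud : u ≠ d := ne_of_lt huv
        rw [swap_apply_of_ne_of_ne huc hud, swap_apply_right] at hvalim ⊢
        constructor
        · exact mem_invSet.mpr ⟨hulc, hvalim⟩
        · simp only [ne_eq, Prod.mk.injEq, not_and]
          intro _ h; exact absurd h hcd'
      · rcases eq_or_ne u d with h | hud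
        · replace h := h.symm; subst h
          have hvc : v ≠ c := fun h => absurd (h ▸ huv) (not_lt.mpr (le_of_lt hcd))
          rw [swap_apply_right, swap_apply_of_ne_of_ne hvc hvd] at hvalim ⊢
          constructor
          · exact mem_invSet.mpr ⟨hcd.trans huv, hvalim⟩
          · simp only [ne_eq, Prod.mk.injEq, not_and]
            intro _ h; exact absurd h hvd
        · rcases eq_or_ne v c with h | hvc
          · replace h := h.symm; subst h
            rw [swap_apply_of_ne_of_ne huc hud, swap_apply_left] at hvalim ⊢
            constructor
            · exact mem_invSet.mpr ⟨huv.trans hcd, hvalim⟩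
            · simp only [ne_eq, Prod.mk.injEq, not_and]
              intro h; exact absurd h huc
          · rw [swap_apply_of_ne_of_ne huc hud, swap_apply_of_ne_of_ne hvc hvd] at hvalim ⊢
            constructor
            · exact mem_invSet.mpr ⟨huv, hvalim⟩
            · simp only [ne_eq, Prod.mk.injEq, not_and]
              intro h; exact absurd h huc

lemma fmap_maps_y_x (hcd : c < d) (hv : x c < x d)
    (nomid : ∀ e : Fin n, c < e → e < d → ¬(x c < x e ∧ x e < x d))
    {p : Fin n × Fin n} (hp : p ∈ invSet (x * Equiv.swap c d)) (hpcd : p ≠ (c, d)) :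
    fmap c d p ∈ invSet x := by
  have yc : (x * Equiv.swap c d) c = x d := by simp
  have yd : (x * Equiv.swap c d) d = x c := by simp
  rcases p with ⟨u, v⟩
  rw [mem_invSet] at hp
  obtain ⟨huv, hval⟩ := hp
  simp only at huv hval
  have hcd' : c ≠ d := ne_of_lt hcd
  by_cases hs : ((u, v).1 = c ∧ (u, v).2 < d) ∨ ((u, v).2 = d ∧ c < (u, v).1)
  · rw [fmap_of_st hs]
    simp only at hs
    rcases hs with ⟨h, hvd⟩ | ⟨h, hcu⟩
    · replace h := h.symm; subst h
      have hvc : v ≠ c := ne_of_gt huv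
      have hvd' : v ≠ d := ne_of_lt hvd
      have hyv : (x * Equiv.swap c d) v = x v := by
        simp [Equiv.Perm.mul_apply, swap_apply_of_ne_of_ne hvc hvd']
      rw [hyv, yc] at hval
      have hnc : ¬ (x c < x v) := fun hcv => nomid v huv hvd ⟨hcv, hval⟩
      have hne : x v ≠ x c := fun h => hvc (x.injective h)
      exact mem_invSet.mpr ⟨huv, lt_of_le_of_ne (not_lt.mp hnc) hne⟩
    · replace h := h.symm; subst h
      have huc : u ≠ c := ne_of_gt hcu
      have hud : u ≠ d := ne_of_lt huv
      have hyu : (x * Equiv.swap c d) u = x u := by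
        simp [Equiv.Perm.mul_apply, swap_apply_of_ne_of_ne huc hud]
      rw [hyu, yd] at hval
      have hnd : ¬ (x u < x d) := fun hud' => nomid u hcu huv ⟨hval, hud'⟩
      have hne : x d ≠ x u := fun h => hud (x.injective h.symm)
      exact mem_invSet.mpr ⟨huv, lt_of_le_of_ne (not_lt.mp hnd) hne⟩
  · rw [fmap_of_not_st hs]
    push_neg at hs
    simp only at hs
    have hvalim : x (Equiv.swap c d v) < x (Equiv.swap c d u) := hval
    rcases eq_or_ne u c with h | huc
    · replace h := h.symm; subst h
      rcases eq_or_ne v d with h | hvd'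
      · replace h := h.symm; subst h
        exact absurd rfl hpcd
      · have hvd : d < v := lt_of_le_of_ne (hs.1 rfl) (Ne.symm hvd')
        have hvc : v ≠ c := ne_of_gt huv
        rw [swap_apply_left, swap_apply_of_ne_of_ne hvc hvd'] at hvalim ⊢
        exact mem_invSet.mpr ⟨hvd, hvalim⟩
    · rcases eq_or_ne v d with h | hvd
      · replace h := h.symm; subst h
        have hulc : u < c := lt_of_le_of_ne (hs.2 rfl) huc
        have hud : u ≠ d := ne_of_lt huv
        rw [swap_apply_of_ne_of_ne huc hud, swap_apply_right] at hvalim ⊢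
        exact mem_invSet.mpr ⟨hulc, hvalim⟩
      · rcases eq_or_ne u d with h | hud
        · replace h := h.symm; subst h
          have hvc : v ≠ c := fun h => absurd (h ▸ huv) (not_lt.mpr (le_of_lt hcd))
          rw [swap_apply_right, swap_apply_of_ne_of_ne hvc hvd] at hvalim ⊢
          exact mem_invSet.mpr ⟨hcd.trans huv, hvalim⟩
        · rcases eq_or_ne v c with h | hvc
          · replace h := h.symm; subst h
            rw [swap_apply_of_ne_of_ne huc hud, swap_apply_left] at hvalim ⊢
            exact mem_invSet.mpr ⟨huv.trans hcd, hvalim⟩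
          · rw [swap_apply_of_ne_of_ne huc hud, swap_apply_of_ne_of_ne hvc hvd] at hvalim ⊢
            exact mem_invSet.mpr ⟨huv, hvalim⟩

lemma cd_mem_invSet_y (hcd : c < d) (hv : x c < x d) :
    (c, d) ∈ invSet (x * Equiv.swap c d) := by
  refine mem_invSet.mpr ⟨hcd, ?_⟩
  simpa using hv

lemma len_lt_swap (hcd : c < d) (hv : x c < x d) : len x < len (x * Equiv.swap c d) := by
  have hmem := cd_mem_invSet_y hcd hv
  have hmaps : ∀ p ∈ invSet x, fmap c d p ∈ (invSet (x * Equiv.swap c d)).erase (c, d) := by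
    intro p hp
    obtain ⟨h1, h2⟩ := fmap_maps_x_y hcd hv hp
    exact Finset.mem_erase.mpr ⟨h2, h1⟩
  have hinj : Set.InjOn (fmap c d) (invSet x : Set (Fin n × Fin n)) := by
    intro p hp q hq h
    have hp' : p.1 < p.2 := (mem_invSet.mp (Finset.mem_coe.mp hp)).1
    have hq' : q.1 < q.2 := (mem_invSet.mp (Finset.mem_coe.mp hq)).1
    have := congrArg (fmap c d) h
    rwa [fmap_invol hcd p hp', fmap_invol hcd q hq'] at this
  have hcard := Finset.card_le_card_of_injOn (fmap c d) hmaps hinj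
  rw [Finset.card_erase_of_mem hmem] at hcard
  have hpos : 0 < (invSet (x * Equiv.swap c d)).card := Finset.card_pos.mpr ⟨_, hmem⟩
  rw [len_eq_invSet, len_eq_invSet]
  omega

lemma len_gt_swap (hcd : c < d) (hv : x d < x c) : len (x * Equiv.swap c d) < len x := by
  have h1 : (x * Equiv.swap c d) c = x d := by simp
  have h2 : (x * Equiv.swap c d) d = x c := by simp
  have := len_lt_swap (x := x * Equiv.swap c d) hcd (by rw [h1, h2]; exact hv)
  rwa [mul_assoc, Equiv.swap_mul_self, mul_one] at this

lemma len_swap_cover (hcd : c < d) (hv : x c < x d)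
    (nomid : ∀ e : Fin n, c < e → e < d → ¬(x c < x e ∧ x e < x d)) :
    len (x * Equiv.swap c d) = len x + 1 := by
  have hmem := cd_mem_invSet_y hcd hv
  have hmaps : ∀ p ∈ (invSet (x * Equiv.swap c d)).erase (c, d), fmap c d p ∈ invSet x := by
    intro p hp
    rcases Finset.mem_erase.mp hp with ⟨hne, hmem'⟩
    exact fmap_maps_y_x hcd hv nomid hmem' hne
  have hinj : Set.InjOn (fmap c d)
      (((invSet (x * Equiv.swap c d)).erase (c, d) : Finset (Fin n × Fin n)) :
        Set (Fin n × Fin n)) := by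
    intro p hp q hq h
    have hp' : p.1 < p.2 :=
      (mem_invSet.mp (Finset.mem_erase.mp (Finset.mem_coe.mp hp)).2).1
    have hq' : q.1 < q.2 :=
      (mem_invSet.mp (Finset.mem_erase.mp (Finset.mem_coe.mp hq)).2).1
    have := congrArg (fmap c d) h
    rwa [fmap_invol hcd p hp', fmap_invol hcd q hq'] at this
  have hcard := Finset.card_le_card_of_injOn (fmap c d) hmaps hinj
  rw [Finset.card_erase_of_mem hmem] at hcard
  have := len_lt_swap hcd hv
  rw [len_eq_invSet, len_eq_invSet] at *
  omega

end fmap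
end S16

namespace S16X
open S16
variable {n : ℕ}

def Rle (x w : Equiv.Perm (Fin n)) : Prop := ∀ i j, rk w i j ≤ rk x i j

def strictOn (x w : Equiv.Perm (Fin n)) (c d e f : ℕ) : Prop :=
  ∀ i j, c < i → i ≤ d → e < j → j ≤ f → rk w i j < rk x i j

def XG (x w : Equiv.Perm (Fin n)) (c d : Fin n) : Prop :=
  c < d ∧ x c < x d ∧ strictOn x w c.val d.val (x c).val (x d).val

lemma isTransposition_norm {t : Equiv.Perm (Fin n)} (h : IsTransposition t) :
    ∃ c d : Fin n, c < d ∧ t = Equiv.swap c d := by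
  obtain ⟨i, j, hne, rfl⟩ := h
  rcases lt_or_gt_of_ne hne with h | h
  · exact ⟨i, j, h, rfl⟩
  · exact ⟨j, i, h, Equiv.swap_comm i j⟩

lemma swap_isTransposition {c d : Fin n} (h : c < d) : IsTransposition (Equiv.swap c d) :=
  ⟨c, d, ne_of_lt h, rfl⟩

lemma norm_of_len_lt {x t : Equiv.Perm (Fin n)} (htr : IsTransposition t)
    (hlen : len x < len (x * t)) : ∃ c d, c < d ∧ t = Equiv.swap c d ∧ x c < x d := by
  obtain ⟨c, d, hcd, rfl⟩ := isTransposition_norm htr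
  refine ⟨c, d, hcd, rfl, ?_⟩
  rcases lt_trichotomy (x c) (x d) with h | h | h
  · exact h
  · exact absurd (x.injective h) (ne_of_lt hcd)
  · exact absurd hlen (by have := len_gt_swap hcd h; omega)

lemma rle_of_bruhatLE {x w : Equiv.Perm (Fin n)} (h : bruhatLE x w) : Rle x w := by
  induction h with
  | refl => intro i j; exact le_refl _
  | tail h1 h2 ih =>
      obtain ⟨t, htr, rfl, hlen⟩ := h2
      obtain ⟨c, d, hcd, rfl, hv⟩ := norm_of_len_lt htr hlen
      intro i j
      exact le_trans (rk_mul_swap_le _ hcd hv i j) (ih i j)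

lemma len_le_of_bruhatLE {x w : Equiv.Perm (Fin n)} (h : bruhatLE x w) : len x ≤ len w := by
  induction h with
  | refl => exact le_refl _
  | tail h1 h2 ih =>
      obtain ⟨t, htr, rfl, hlen⟩ := h2
      exact le_trans ih (le_of_lt hlen)

lemma len_lt_of_bruhatLE_ne {x w : Equiv.Perm (Fin n)} (h : bruhatLE x w) (hne : x ≠ w) :
    len x < len w := by
  induction h with
  | refl => exact absurd rfl hne
  | tail h1 h2 ih =>
      obtain ⟨t, htr, rfl, hlen⟩ := h2
      exact lt_of_le_of_lt (len_le_of_bruhatLE h1) hlen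

lemma bruhatLE_step {x t : Equiv.Perm (Fin n)} (htr : IsTransposition t)
    (hlen : len x < len (x * t)) : bruhatLE x (x * t) :=
  Relation.ReflTransGen.single ⟨t, htr, rfl, hlen⟩

lemma eq_of_rk_eq {x w : Equiv.Perm (Fin n)} (h : ∀ i j, rk x i j = rk w i j) : x = w := by
  have key : ∀ (a b : Equiv.Perm (Fin n)), (∀ i j, rk a i j = rk b i j) →
      ∀ u : Fin n, (b u).val ≤ (a u).val := by
    intro a b hab u
    have e1 : rk a (u.val + 1) ((a u).val + 1)
        = rk a u.val ((a u).val + 1) + 1 := by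
      rw [rk_split a (Nat.le_succ u.val), cnt_single u]
      simp
    have e2 : rk b (u.val + 1) ((a u).val + 1)
        = rk b u.val ((a u).val + 1)
          + (if (b u).val < (a u).val + 1 then 1 else 0) := by
      rw [rk_split b (Nat.le_succ u.val), cnt_single u]
    have e3 := hab (u.val + 1) ((a u).val + 1)
    have e4 := hab u.val ((a u).val + 1)
    split_ifs at e2 <;> omega
  have h' : ∀ i j, rk w i j = rk x i j := fun i j => (h i j).symm
  have h1 := key x w h
  have h2 := key w x h'
  apply Equiv.ext
  intro u
  exact Fin.ext (le_antisymm (h2 u) (h1 u))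

lemma exists_step {x w : Equiv.Perm (Fin n)} (hR : Rle x w) (hne : x ≠ w) :
    ∃ c d : Fin n, c < d ∧ x c < x d ∧
      (∀ e : Fin n, c < e → e < d → ¬(x c < x e ∧ x e < x d)) ∧
      strictOn x w c.val d.val (x c).val (x d).val := by
  classical
  set S : Finset (Fin n) := Finset.univ.filter (fun u => x u ≠ w u) with hS
  have hSne : S.Nonempty := by
    by_contra hcon
    rw [Finset.not_nonempty_iff_eq_empty] at hcon
    refine hne (Equiv.ext fun u => ?_)
    by_contra hu
    have : u ∈ S := by rw [hS]; simp [hu]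
    rw [hcon] at this
    exact absurd this (Finset.notMem_empty u)
  set i : Fin n := S.min' hSne with hi
  have hiS : i ∈ S := S.min'_mem hSne
  have hxiwi : x i ≠ w i := by
    have := hiS; rw [hS] at this; simpa using this
  have hbelow : ∀ u : Fin n, u < i → x u = w u := by
    intro u hu
    by_contra hc
    have : u ∈ S := by rw [hS]; simp [hc]
    exact absurd (S.min'_le u this) (not_le.mpr hu)
  have hbelow' : ∀ u : Fin n, 0 ≤ u.val → u.val < i.val → x u = w u := by
    intro u _ hu; exact hbelow u hu
  -- x i < w i
  have hxlt : (x i).val < (w i).val := by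
    have h1 := hR (i.val + 1) ((w i).val + 1)
    rw [rk_split x (Nat.le_succ i.val), rk_split w (Nat.le_succ i.val),
      cnt_single i, cnt_single i] at h1
    rw [rk_eq_cnt, rk_eq_cnt, cnt_congr hbelow'] at h1
    have hvne : (x i).val ≠ (w i).val := fun hc => hxiwi (Fin.ext hc)
    split_ifs at h1 <;> omega
  -- the set T
  set T : Finset (Fin n) :=
    Finset.univ.filter (fun u => i < u ∧ x i < x u ∧ (x u).val ≤ (w i).val) with hT
  have hTne : T.Nonempty := by
    refine ⟨x⁻¹ (w i), ?_⟩
    have hxe : x (x⁻¹ (w i)) = w i := x.apply_symm_apply (w i)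
    have hei : x⁻¹ (w i) ≠ i := by
      intro hc; rw [hc] at hxe; exact hxiwi hxe
    have hie : i < x⁻¹ (w i) := by
      rcases lt_trichotomy (x⁻¹ (w i)) i with hlt | heq | hgt
      · exfalso
        have := hbelow _ hlt
        rw [hxe] at this
        exact absurd (w.injective this.symm) (ne_of_lt hlt)
      · exact absurd heq hei
      · exact hgt
    rw [hT]
    simp only [Finset.mem_filter, Finset.mem_univ, true_and]
    refine ⟨hie, ?_, ?_⟩
    · rw [hxe]; exact Fin.lt_def.mpr hxlt
    · rw [hxe]
  set d : Fin n := T.min' hTne with hd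
  have hdT : d ∈ T := T.min'_mem hTne
  have hdprops : i < d ∧ x i < x d ∧ (x d).val ≤ (w i).val := by
    have := hdT; rw [hT] at this; simpa using this
  obtain ⟨hid, hxid, hxdw⟩ := hdprops
  have hdmin : ∀ u : Fin n, i < u → x i < x u → (x u).val ≤ (w i).val → d ≤ u := by
    intro u h1 h2 h3
    refine T.min'_le u ?_
    rw [hT]; simp only [Finset.mem_filter, Finset.mem_univ, true_and]
    exact ⟨h1, h2, h3⟩
  have hnomid : ∀ e : Fin n, i < e → e < d → ¬(x i < x e ∧ x e < x d) := by
    rintro e he1 he2 ⟨hm1, hm2⟩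
    have : (x e).val ≤ (w i).val :=
      le_trans (le_of_lt (Fin.lt_def.mp hm2)) hxdw
    exact absurd (hdmin e he1 hm1 this) (not_le.mpr he2)
  refine ⟨i, d, hid, hxid, hnomid, ?_⟩
  intro k j hk1 hk2 hj1 hj2
  have hxdw' : (x d).val ≤ (w i).val := hxdw
  have dx := rk_decomp x i hk1 j
  have dw := rk_decomp w i hk1 j
  have hCj : rk x i.val j = rk w i.val j := by
    rw [rk_eq_cnt, rk_eq_cnt, cnt_congr hbelow']
  have hxj : (if (x i).val < j then 1 else 0) = 1 := if_pos hj1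
  have hwj : (if (w i).val < j then 1 else 0) = 0 := if_neg (by omega)
  have dx4 := rk_decomp x i hk1 ((w i).val + 1)
  have dw4 := rk_decomp w i hk1 ((w i).val + 1)
  have hC4 : rk x i.val ((w i).val + 1) = rk w i.val ((w i).val + 1) := by
    rw [rk_eq_cnt, rk_eq_cnt, cnt_congr hbelow']
  have hx4 : (if (x i).val < (w i).val + 1 then 1 else 0) = 1 := if_pos (by omega)
  have hw4 : (if (w i).val < (w i).val + 1 then 1 else 0) = 1 := if_pos (by omega)
  have hR4 := hR k ((w i).val + 1)
  have hAA4 : cnt x (i.val + 1) k j = cnt x (i.val + 1) k ((w i).val + 1) := by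
    refine cnt_congr_j ?_
    intro u hu1 hu2
    constructor
    · intro h; omega
    · intro h
      have hui : i < u := by rw [Fin.lt_def]; omega
      have hine : u ≠ i := by intro hc; rw [hc] at hu1; omega
      have hxune : x u ≠ x i := fun hc => hine (x.injective hc)
      have hnlt : ¬ (x i < x u) := by
        intro hc
        have := hdmin u hui hc (by omega)
        rw [Fin.le_def] at this
        have hkd' : k ≤ d.val := hk2
        omega
      rw [not_lt, Fin.le_def] at hnlt
      have : (x u).val < (x i).val := lt_of_le_of_ne hnlt (fun hc => hxune (Fin.ext hc))
      omega
  have hBB4 : cnt w (i.val + 1) k j ≤ cnt w (i.val + 1) k ((w i).val + 1) :=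
    cnt_mono_j w _ _ (by omega)
  omega

def Msum (x w : Equiv.Perm (Fin n)) : ℕ :=
  ∑ p ∈ Finset.range (n + 1) ×ˢ Finset.range (n + 1), (rk x p.1 p.2 - rk w p.1 p.2)

lemma rle_to_bruhatLE {w : Equiv.Perm (Fin n)} :
    ∀ (m : ℕ) (x : Equiv.Perm (Fin n)), Msum x w = m → Rle x w → bruhatLE x w := by
  intro m
  induction m using Nat.strong_induction_on with
  | _ m ih =>
    intro x hm hR
    by_cases hne : x = w
    · subst hne; exact Relation.ReflTransGen.refl
    · obtain ⟨c, d, hcd, hv, hnomid, hstrict⟩ := exists_step hR hne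
      have hRy : Rle (x * Equiv.swap c d) w := by
        intro p q
        have heq := rk_mul_swap x hcd hv p q
        by_cases hc : (c.val < p ∧ p ≤ d.val) ∧ ((x c).val < q ∧ q ≤ (x d).val)
        · have := hstrict p q hc.1.1 hc.1.2 hc.2.1 hc.2.2
          rw [if_pos hc] at heq
          omega
        · rw [if_neg hc] at heq
          have := hR p q
          omega
      have hdec : Msum (x * Equiv.swap c d) w < Msum x w := by
        refine Finset.sum_lt_sum (fun p _ => ?_) ⟨(c.val + 1, (x c).val + 1), ?_, ?_⟩
        · exact Nat.sub_le_sub_right (rk_mul_swap_le x hcd hv p.1 p.2) _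
        · rw [Finset.mem_product, Finset.mem_range, Finset.mem_range]
          exact ⟨by omega, by have := (x c).isLt; omega⟩
        · have heq := rk_mul_swap x hcd hv (c.val + 1) ((x c).val + 1)
          have hcond : (c.val < c.val + 1 ∧ c.val + 1 ≤ d.val)
              ∧ ((x c).val < (x c).val + 1 ∧ (x c).val + 1 ≤ (x d).val) := by
            have h1 : c.val < d.val := hcd
            have h2 : (x c).val < (x d).val := hv
            omega
          rw [if_pos hcond] at heq
          have hst := hstrict (c.val + 1) ((x c).val + 1)
            hcond.1.1 hcond.1.2 hcond.2.1 hcond.2.2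
          simp only
          omega
      have hlen : len x < len (x * Equiv.swap c d) := len_lt_swap hcd hv
      exact Relation.ReflTransGen.head
        ⟨Equiv.swap c d, swap_isTransposition hcd, rfl, hlen⟩
        (ih (Msum (x * Equiv.swap c d) w) (by omega) _ rfl hRy)

lemma bruhatLE_iff_rle {x w : Equiv.Perm (Fin n)} : bruhatLE x w ↔ Rle x w :=
  ⟨rle_of_bruhatLE, fun h => rle_to_bruhatLE (Msum x w) x rfl h⟩


def ASet (x w : Equiv.Perm (Fin n)) : Set (Equiv.Perm (Fin n)) :=
  {t | IsTransposition t ∧ bruhatLT x (x * t) ∧ bruhatLE (x * t) w}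

lemma xg_iff {x w : Equiv.Perm (Fin n)} (hRle : Rle x w) {c d : Fin n} (hcd : c < d) :
    (bruhatLT x (x * Equiv.swap c d) ∧ bruhatLE (x * Equiv.swap c d) w) ↔ XG x w c d := by
  constructor
  · rintro ⟨⟨hle, hne⟩, hw⟩
    have hlen : len x < len (x * Equiv.swap c d) := len_lt_of_bruhatLE_ne hle hne
    have hv : x c < x d := by
      rcases lt_trichotomy (x c) (x d) with h | h | h
      · exact h
      · exact absurd (x.injective h) (ne_of_lt hcd)
      · exact absurd hlen (by have := len_gt_swap hcd h; omega)
    refine ⟨hcd, hv, ?_⟩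
    intro i j h1 h2 h3 h4
    have hRy := rle_of_bruhatLE hw
    have heq := rk_mul_swap x hcd hv i j
    rw [if_pos (show (c.val < i ∧ i ≤ d.val) ∧ ((x c).val < j ∧ j ≤ (x d).val) from
      ⟨⟨h1, h2⟩, ⟨h3, h4⟩⟩)] at heq
    have := hRy i j
    omega
  · rintro ⟨_, hv, hstrict⟩
    have hlen : len x < len (x * Equiv.swap c d) := len_lt_swap hcd hv
    refine ⟨⟨bruhatLE_step (swap_isTransposition hcd) hlen, ?_⟩, ?_⟩
    · intro hc
      rw [← hc] at hlen
      exact absurd hlen (lt_irrefl _)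
    · refine rle_to_bruhatLE (Msum (x * Equiv.swap c d) w) _ rfl ?_
      intro p q
      have heq := rk_mul_swap x hcd hv p q
      by_cases hcond : (c.val < p ∧ p ≤ d.val) ∧ ((x c).val < q ∧ q ≤ (x d).val)
      · have := hstrict p q hcond.1.1 hcond.1.2 hcond.2.1 hcond.2.2
        rw [if_pos hcond] at heq
        omega
      · rw [if_neg hcond] at heq
        have := hRle p q
        omega

lemma mem_ASet_iff {x w : Equiv.Perm (Fin n)} (hRle : Rle x w) {c d : Fin n} (hcd : c < d) :
    Equiv.swap c d ∈ ASet x w ↔ XG x w c d := by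
  constructor
  · rintro ⟨_, h2, h3⟩
    exact (xg_iff hRle hcd).mp ⟨h2, h3⟩
  · intro h
    obtain ⟨h2, h3⟩ := (xg_iff hRle hcd).mpr h
    exact ⟨swap_isTransposition hcd, h2, h3⟩

lemma ASet_elim {x w : Equiv.Perm (Fin n)} (hRle : Rle x w) {s : Equiv.Perm (Fin n)}
    (hs : s ∈ ASet x w) :
    ∃ c d, c < d ∧ s = Equiv.swap c d ∧ XG x w c d := by
  obtain ⟨htr, h2, h3⟩ := hs
  obtain ⟨c, d, hcd, rfl⟩ := isTransposition_norm htr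
  exact ⟨c, d, hcd, rfl, (xg_iff hRle hcd).mp ⟨h2, h3⟩⟩

lemma strict_transfer {x w : Equiv.Perm (Fin n)} {a b : Fin n} (hab : a < b) (hv : x a < x b)
    {c d e f : ℕ} (h : strictOn (x * Equiv.swap a b) w c d e f) : strictOn x w c d e f :=
  fun i j h1 h2 h3 h4 =>
    lt_of_lt_of_le (h i j h1 h2 h3 h4) (rk_mul_swap_le x hab hv i j)

lemma swap_conj {a b c : Fin n} (hca : c ≠ a) (hcb : c ≠ b) :
    Equiv.swap a b * Equiv.swap c a * Equiv.swap a b = Equiv.swap c b := by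
  have h := (Equiv.swap_apply_apply (Equiv.swap a b) c a).symm
  rw [Equiv.swap_inv] at h
  rw [h, Equiv.swap_apply_of_ne_of_ne hca hcb, Equiv.swap_apply_left]

lemma swap_conj' {a b d : Fin n} (hda : d ≠ a) (hdb : d ≠ b) :
    Equiv.swap a b * Equiv.swap a d * Equiv.swap a b = Equiv.swap b d := by
  have h := (Equiv.swap_apply_apply (Equiv.swap a b) a d).symm
  rw [Equiv.swap_inv] at h
  rw [h, Equiv.swap_apply_of_ne_of_ne hda hdb, Equiv.swap_apply_left]

lemma swap_conj'' {a b c : Fin n} (hca : c ≠ a) (hcb : c ≠ b) :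
    Equiv.swap a b * Equiv.swap c b * Equiv.swap a b = Equiv.swap c a := by
  have h := (Equiv.swap_apply_apply (Equiv.swap a b) c b).symm
  rw [Equiv.swap_inv] at h
  rw [h, Equiv.swap_apply_of_ne_of_ne hca hcb, Equiv.swap_apply_right]

lemma swap_conj3 {a b c d : Fin n} (hca : c ≠ a) (hcb : c ≠ b) (hda : d ≠ a) (hdb : d ≠ b) :
    Equiv.swap a b * Equiv.swap c d * Equiv.swap a b = Equiv.swap c d := by
  have h := (Equiv.swap_apply_apply (Equiv.swap a b) c d).symm
  rw [Equiv.swap_inv] at h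
  rw [h, Equiv.swap_apply_of_ne_of_ne hca hcb, Equiv.swap_apply_of_ne_of_ne hda hdb]

lemma swap_conj4 {a b d : Fin n} (hda : d ≠ a) (hdb : d ≠ b) :
    Equiv.swap a b * Equiv.swap b d * Equiv.swap a b = Equiv.swap a d := by
  have h := (Equiv.swap_apply_apply (Equiv.swap a b) b d).symm
  rw [Equiv.swap_inv] at h
  rw [h, Equiv.swap_apply_of_ne_of_ne hda hdb, Equiv.swap_apply_right]

section key
variable {x w : Equiv.Perm (Fin n)} {a b : Fin n}

lemma key1 (hab : a < b) (hv : x a < x b)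
    (hR' : strictOn x w a.val b.val (x a).val (x b).val)
    (hRle : Rle x w) (hRley : Rle (x * Equiv.swap a b) w)
    {s : Equiv.Perm (Fin n)} (hs : s ∈ ASet (x * Equiv.swap a b) w) :
    s ∈ ASet x w ∨ Equiv.swap a b * s * Equiv.swap a b ∈ ASet x w := by
  obtain ⟨c, d, hcd, rfl, hXGy⟩ := ASet_elim hRley hs
  obtain ⟨_, hYlt, hYstrict⟩ := hXGy
  have hab' : a.val < b.val := hab
  have hcd' : c.val < d.val := hcd
  have hv' : (x a).val < (x b).val := hv
  by_cases hca : c = a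
  · replace hca := hca.symm; subst hca
    have yc : (x * Equiv.swap a b) a = x b := by
      rw [Equiv.Perm.mul_apply, Equiv.swap_apply_left]
    by_cases hdb : d = b
    · replace hdb := hdb.symm; subst hdb
      exfalso
      rw [yc] at hYlt
      have : (x * Equiv.swap a b) b = x a := by
        rw [Equiv.Perm.mul_apply, Equiv.swap_apply_right]
      rw [this] at hYlt
      exact absurd (hYlt.trans hv) (lt_irrefl _)
    · have hda : d ≠ a := ne_of_gt hcd
      have yd : (x * Equiv.swap a b) d = x d := by
        rw [Equiv.Perm.mul_apply, Equiv.swap_apply_of_ne_of_ne hda hdb]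
      rw [yc, yd] at hYlt hYstrict
      have SY := strict_transfer hab hv hYstrict
      have hbd' : (x b).val < (x d).val := hYlt
      rcases lt_or_gt_of_ne hdb with hdlt | hdgt
      · -- a < d < b : left, pair (a, d)
        have hdb' : d.val < b.val := hdlt
        refine Or.inl ((mem_ASet_iff hRle hcd).mpr ⟨hcd, hv.trans hYlt, ?_⟩)
        intro i j h1 h2 h3 h4
        by_cases hj : j ≤ (x b).val
        · exact hR' i j h1 (by omega) h3 hj
        · exact SY i j h1 h2 (by omega) h4
      · -- d > b : right, pair (b, d)
        have hbd : b < d := hdgt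
        have hbdv : b.val < d.val := hbd
        have hXG : XG x w b d := by
          refine ⟨hbd, hYlt, ?_⟩
          intro i j h1 h2 h3 h4
          exact SY i j (by omega) h2 h3 h4
        refine Or.inr ?_
        rw [swap_conj' hda hdb]
        exact (mem_ASet_iff hRle hbd).mpr hXG
  · by_cases hcb : c = b
    · replace hcb := hcb.symm; subst hcb
      -- c = b, d > b
      have hda : d ≠ a := ne_of_gt (hab.trans hcd)
      have hdb : d ≠ b := ne_of_gt hcd
      have yc : (x * Equiv.swap a b) b = x a := by
        rw [Equiv.Perm.mul_apply, Equiv.swap_apply_right]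
      have yd : (x * Equiv.swap a b) d = x d := by
        rw [Equiv.Perm.mul_apply, Equiv.swap_apply_of_ne_of_ne hda hdb]
      rw [yc, yd] at hYlt hYstrict
      have SY := strict_transfer hab hv hYstrict
      have had' : (x a).val < (x d).val := hYlt
      have hxdb : x d ≠ x b := fun h => (ne_of_gt hcd) (x.injective h)
      rcases lt_or_gt_of_ne hxdb with hlt | hgt
      · -- x d < x b : right, pair (a, d)
        have had : a < d := hab.trans hcd
        have hXG : XG x w a d := by
          refine ⟨had, hYlt, ?_⟩
          intro i j h1 h2 h3 h4
          by_cases hi : i ≤ b.val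
          · have : (x d).val < (x b).val := hlt
            exact hR' i j h1 hi h3 (by omega)
          · exact SY i j (by omega) h2 h3 h4
        refine Or.inr ?_
        rw [swap_conj4 hda hdb]
        exact (mem_ASet_iff hRle had).mpr hXG
      · -- x b < x d : left, pair (b, d)
        have hgt' : (x b).val < (x d).val := hgt
        refine Or.inl ((mem_ASet_iff hRle hcd).mpr ⟨hcd, hgt, ?_⟩)
        intro i j h1 h2 h3 h4
        exact SY i j h1 h2 (by omega) h4
    · by_cases hda : d = a
      · replace hda := hda.symm; subst hda
        -- d = a, c < a
        have yc : (x * Equiv.swap a b) c = x c := by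
          rw [Equiv.Perm.mul_apply, Equiv.swap_apply_of_ne_of_ne hca hcb]
        have yd : (x * Equiv.swap a b) a = x b := by
          rw [Equiv.Perm.mul_apply, Equiv.swap_apply_left]
        rw [yc, yd] at hYlt hYstrict
        have SY := strict_transfer hab hv hYstrict
        have hcb'' : (x c).val < (x b).val := hYlt
        have hxca : x c ≠ x a := fun h => hca (x.injective h)
        rcases lt_or_gt_of_ne hxca with hlt | hgt
        · -- x c < x a : left, pair (c, a)
          have hlt' : (x c).val < (x a).val := hlt
          refine Or.inl ((mem_ASet_iff hRle hcd).mpr ⟨hcd, hlt, ?_⟩)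
          intro i j h1 h2 h3 h4
          exact SY i j h1 h2 h3 (by omega)
        · -- x a < x c : right, pair (c, b)
          have hgt' : (x a).val < (x c).val := hgt
          have hcbp : c < b := hcd.trans hab
          have hXG : XG x w c b := by
            refine ⟨hcbp, hYlt, ?_⟩
            intro i j h1 h2 h3 h4
            by_cases hi : i ≤ a.val
            · exact SY i j h1 hi h3 h4
            · exact hR' i j (by omega) h2 (by omega) h4
          refine Or.inr ?_
          rw [swap_conj hca hcb]
          exact (mem_ASet_iff hRle hcbp).mpr hXG
      · by_cases hdb : d = b
        · replace hdb := hdb.symm; subst hdb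
          -- d = b, c ≠ a
          have yc : (x * Equiv.swap a b) c = x c := by
            rw [Equiv.Perm.mul_apply, Equiv.swap_apply_of_ne_of_ne hca hcb]
          have yd : (x * Equiv.swap a b) b = x a := by
            rw [Equiv.Perm.mul_apply, Equiv.swap_apply_right]
          rw [yc, yd] at hYlt hYstrict
          have SY := strict_transfer hab hv hYstrict
          have hca' : (x c).val < (x a).val := hYlt
          rcases lt_or_gt_of_ne hca with hclt | hcgt
          · -- c < a : right, pair (c, a)
            have hclt' : c.val < a.val := hclt
            have hXG : XG x w c a := by
              refine ⟨hclt, hYlt, ?_⟩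
              intro i j h1 h2 h3 h4
              exact SY i j h1 (by omega) h3 h4
            refine Or.inr ?_
            rw [swap_conj'' hca hcb]
            exact (mem_ASet_iff hRle hclt).mpr hXG
          · -- a < c < b : left, pair (c, b)
            have hcgt' : a.val < c.val := hcgt
            refine Or.inl ((mem_ASet_iff hRle hcd).mpr ⟨hcd, hYlt.trans hv, ?_⟩)
            intro i j h1 h2 h3 h4
            by_cases hj : j ≤ (x a).val
            · exact SY i j h1 h2 h3 hj
            · exact hR' i j (by omega) h2 (by omega) h4
        · -- disjoint : left, pair (c, d)
          have yc : (x * Equiv.swap a b) c = x c := by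
            rw [Equiv.Perm.mul_apply, Equiv.swap_apply_of_ne_of_ne hca hcb]
          have yd : (x * Equiv.swap a b) d = x d := by
            rw [Equiv.Perm.mul_apply, Equiv.swap_apply_of_ne_of_ne hda hdb]
          rw [yc, yd] at hYlt hYstrict
          have SY := strict_transfer hab hv hYstrict
          exact Or.inl ((mem_ASet_iff hRle hcd).mpr ⟨hcd, hYlt, SY⟩)

lemma key2 (hab : a < b) (hv : x a < x b)
    (hR' : strictOn x w a.val b.val (x a).val (x b).val)
    (hRle : Rle x w) (hRley : Rle (x * Equiv.swap a b) w)
    {s : Equiv.Perm (Fin n)} (hs : s ∈ ASet (x * Equiv.swap a b) w)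
    (hs' : Equiv.swap a b * s * Equiv.swap a b ∈ ASet (x * Equiv.swap a b) w) :
    s ∈ ASet x w := by
  obtain ⟨c, d, hcd, rfl, hXGy⟩ := ASet_elim hRley hs
  obtain ⟨_, hYlt, hYstrict⟩ := hXGy
  have hab' : a.val < b.val := hab
  have hcd' : c.val < d.val := hcd
  have hv' : (x a).val < (x b).val := hv
  by_cases hca : c = a
  · replace hca := hca.symm; subst hca
    have yc : (x * Equiv.swap a b) a = x b := by
      rw [Equiv.Perm.mul_apply, Equiv.swap_apply_left]
    by_cases hdb : d = b
    · replace hdb := hdb.symm; subst hdb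
      exfalso
      rw [yc] at hYlt
      have : (x * Equiv.swap a b) b = x a := by
        rw [Equiv.Perm.mul_apply, Equiv.swap_apply_right]
      rw [this] at hYlt
      exact absurd (hYlt.trans hv) (lt_irrefl _)
    · have hda : d ≠ a := ne_of_gt hcd
      have yd : (x * Equiv.swap a b) d = x d := by
        rw [Equiv.Perm.mul_apply, Equiv.swap_apply_of_ne_of_ne hda hdb]
      rw [yc, yd] at hYlt hYstrict
      have SY := strict_transfer hab hv hYstrict
      have hbd' : (x b).val < (x d).val := hYlt
      rcases lt_or_gt_of_ne hdb with hdlt | hdgt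
      · -- a < d < b : left, pair (a, d)
        have hdb' : d.val < b.val := hdlt
        refine (mem_ASet_iff hRle hcd).mpr ⟨hcd, hv.trans hYlt, ?_⟩
        intro i j h1 h2 h3 h4
        by_cases hj : j ≤ (x b).val
        · exact hR' i j h1 (by omega) h3 hj
        · exact SY i j h1 h2 (by omega) h4
      · -- d > b : need the conjugate rectangle too
        have hbd : b < d := hdgt
        rw [swap_conj' hda hdb] at hs'
        obtain ⟨_, hYlt2, hYstrict2⟩ := (mem_ASet_iff hRley hbd).mp hs'
        have yb : (x * Equiv.swap a b) b = x a := by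
          rw [Equiv.Perm.mul_apply, Equiv.swap_apply_right]
        rw [yb, yd] at hYlt2 hYstrict2
        have SY' := strict_transfer hab hv hYstrict2
        have had' : (x a).val < (x d).val := hYlt2
        refine (mem_ASet_iff hRle hcd).mpr ⟨hcd, hYlt2, ?_⟩
        intro i j h1 h2 h3 h4
        by_cases hi : i ≤ b.val
        · by_cases hj : j ≤ (x b).val
          · exact hR' i j h1 hi h3 hj
          · exact SY i j h1 h2 (by omega) h4
        · exact SY' i j (by omega) h2 h3 h4
  · by_cases hcb : c = b
    · replace hcb := hcb.symm; subst hcb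
      -- c = b, d > b
      have hda : d ≠ a := ne_of_gt (hab.trans hcd)
      have hdb : d ≠ b := ne_of_gt hcd
      have yc : (x * Equiv.swap a b) b = x a := by
        rw [Equiv.Perm.mul_apply, Equiv.swap_apply_right]
      have yd : (x * Equiv.swap a b) d = x d := by
        rw [Equiv.Perm.mul_apply, Equiv.swap_apply_of_ne_of_ne hda hdb]
      rw [yc, yd] at hYlt hYstrict
      have SY := strict_transfer hab hv hYstrict
      -- from hs' : swap a d ∈ ASet y w, get x b < x d
      have had : a < d := hab.trans hcd
      rw [swap_conj4 hda hdb] at hs'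
      obtain ⟨_, hYlt2, _⟩ := (mem_ASet_iff hRley had).mp hs'
      have ya : (x * Equiv.swap a b) a = x b := by
        rw [Equiv.Perm.mul_apply, Equiv.swap_apply_left]
      rw [ya, yd] at hYlt2
      have hgt' : (x b).val < (x d).val := hYlt2
      refine (mem_ASet_iff hRle hcd).mpr ⟨hcd, hYlt2, ?_⟩
      intro i j h1 h2 h3 h4
      exact SY i j h1 h2 (by omega) h4
    · by_cases hda : d = a
      · replace hda := hda.symm; subst hda
        -- d = a, c < a
        have yc : (x * Equiv.swap a b) c = x c := by
          rw [Equiv.Perm.mul_apply, Equiv.swap_apply_of_ne_of_ne hca hcb]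
        have yd : (x * Equiv.swap a b) a = x b := by
          rw [Equiv.Perm.mul_apply, Equiv.swap_apply_left]
        rw [yc, yd] at hYlt hYstrict
        have SY := strict_transfer hab hv hYstrict
        -- from hs' : swap c b ∈ ASet y w, get x c < x a
        have hcbp : c < b := hcd.trans hab
        rw [swap_conj hca hcb] at hs'
        obtain ⟨_, hYlt2, _⟩ := (mem_ASet_iff hRley hcbp).mp hs'
        have yb : (x * Equiv.swap a b) b = x a := by
          rw [Equiv.Perm.mul_apply, Equiv.swap_apply_right]
        rw [yc, yb] at hYlt2
        have hlt' : (x c).val < (x a).val := hYlt2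
        refine (mem_ASet_iff hRle hcd).mpr ⟨hcd, hYlt2, ?_⟩
        intro i j h1 h2 h3 h4
        exact SY i j h1 h2 h3 (by omega)
      · by_cases hdb : d = b
        · replace hdb := hdb.symm; subst hdb
          -- d = b, c ≠ a
          have yc : (x * Equiv.swap a b) c = x c := by
            rw [Equiv.Perm.mul_apply, Equiv.swap_apply_of_ne_of_ne hca hcb]
          have yd : (x * Equiv.swap a b) b = x a := by
            rw [Equiv.Perm.mul_apply, Equiv.swap_apply_right]
          rw [yc, yd] at hYlt hYstrict
          have SY := strict_transfer hab hv hYstrict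
          have hca' : (x c).val < (x a).val := hYlt
          rcases lt_or_gt_of_ne hca with hclt | hcgt
          · -- c < a : need conjugate rectangle (c, a)
            have hclt' : c.val < a.val := hclt
            rw [swap_conj'' hca hcb] at hs'
            obtain ⟨_, hYlt2, hYstrict2⟩ := (mem_ASet_iff hRley hclt).mp hs'
            have ya : (x * Equiv.swap a b) a = x b := by
              rw [Equiv.Perm.mul_apply, Equiv.swap_apply_left]
            rw [yc, ya] at hYlt2 hYstrict2
            have SY' := strict_transfer hab hv hYstrict2
            refine (mem_ASet_iff hRle hcd).mpr ⟨hcd, hYlt.trans hv, ?_⟩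
            intro i j h1 h2 h3 h4
            by_cases hj : j ≤ (x a).val
            · exact SY i j h1 h2 h3 hj
            · by_cases hi : i ≤ a.val
              · exact SY' i j h1 hi h3 h4
              · exact hR' i j (by omega) h2 (by omega) h4
          · -- a < c < b : left, pair (c, b)
            have hcgt' : a.val < c.val := hcgt
            refine (mem_ASet_iff hRle hcd).mpr ⟨hcd, hYlt.trans hv, ?_⟩
            intro i j h1 h2 h3 h4
            by_cases hj : j ≤ (x a).val
            · exact SY i j h1 h2 h3 hj
            · exact hR' i j (by omega) h2 (by omega) h4
        · -- disjoint
          have yc : (x * Equiv.swap a b) c = x c := by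
            rw [Equiv.Perm.mul_apply, Equiv.swap_apply_of_ne_of_ne hca hcb]
          have yd : (x * Equiv.swap a b) d = x d := by
            rw [Equiv.Perm.mul_apply, Equiv.swap_apply_of_ne_of_ne hda hdb]
          rw [yc, yd] at hYlt hYstrict
          have SY := strict_transfer hab hv hYstrict
          exact (mem_ASet_iff hRle hcd).mpr ⟨hcd, hYlt, SY⟩

end key

section count
variable {x w : Equiv.Perm (Fin n)} {a b : Fin n}

lemma tprime_not_mem (hab : a < b) (hv : x a < x b) :
    Equiv.swap a b ∉ ASet (x * Equiv.swap a b) w := by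
  rintro ⟨_, ⟨hle, hne⟩, _⟩
  have hxx : (x * Equiv.swap a b) * Equiv.swap a b = x := by
    rw [mul_assoc, Equiv.swap_mul_self, mul_one]
  have h1 := len_lt_of_bruhatLE_ne hle hne
  rw [hxx] at h1
  exact absurd (h1.trans (len_lt_swap hab hv)) (lt_irrefl _)

lemma conj_eq_self {s : Equiv.Perm (Fin n)} 
    (h : Equiv.swap a b * s * Equiv.swap a b = Equiv.swap a b) : s = Equiv.swap a b := by
  have hss : Equiv.swap a b * Equiv.swap a b = 1 := Equiv.swap_mul_self a b
  have h1 : Equiv.swap a b * (s * Equiv.swap a b) = Equiv.swap a b * 1 := by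
    rw [← mul_assoc, h, mul_one]
  have h2 : s * Equiv.swap a b = 1 := mul_left_cancel h1
  have h3 : s = (Equiv.swap a b)⁻¹ := eq_inv_of_mul_eq_one_left h2
  rw [h3, Equiv.swap_inv]

lemma conj_conj (a b : Fin n) (z : Equiv.Perm (Fin n)) :
    Equiv.swap a b * (Equiv.swap a b * z * Equiv.swap a b) * Equiv.swap a b = z := by
  have hss : Equiv.swap a b * Equiv.swap a b = 1 := Equiv.swap_mul_self a b
  simp only [← mul_assoc]
  rw [hss, one_mul, mul_assoc, hss, mul_one]

lemma psi_maps [DecidablePred (· ∈ ASet x w)] (hab : a < b) (hv : x a < x b)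
    (hR' : strictOn x w a.val b.val (x a).val (x b).val)
    (hRle : Rle x w) (hRley : Rle (x * Equiv.swap a b) w) :
    ∀ s ∈ ASet (x * Equiv.swap a b) w,
      (if s ∈ ASet x w then s else Equiv.swap a b * s * Equiv.swap a b)
        ∈ ASet x w \ {Equiv.swap a b} := by
  intro s hs
  have hsne : s ≠ Equiv.swap a b := by
    intro hc; rw [hc] at hs; exact tprime_not_mem hab hv hs
  by_cases hsx : s ∈ ASet x w
  · rw [if_pos hsx]
    exact ⟨hsx, by simpa using hsne⟩
  · rw [if_neg hsx]
    rcases key1 hab hv hR' hRle hRley hs with h | h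
    · exact absurd h hsx
    · refine ⟨h, ?_⟩
      simp only [Set.mem_singleton_iff]
      intro hc
      exact hsne (conj_eq_self hc)

lemma psi_inj [DecidablePred (· ∈ ASet x w)] (hab : a < b) (hv : x a < x b)
    (hR' : strictOn x w a.val b.val (x a).val (x b).val)
    (hRle : Rle x w) (hRley : Rle (x * Equiv.swap a b) w) :
    Set.InjOn (fun s => if s ∈ ASet x w then s else Equiv.swap a b * s * Equiv.swap a b)
      (ASet (x * Equiv.swap a b) w) := by
  intro s1 h1 s2 h2 heq
  simp only at heq
  by_cases b1 : s1 ∈ ASet x w <;> by_cases b2 : s2 ∈ ASet x w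
  · rwa [if_pos b1, if_pos b2] at heq
  · rw [if_pos b1, if_neg b2] at heq
    exfalso
    refine b2 (key2 hab hv hR' hRle hRley h2 ?_)
    rw [← heq]; exact h1
  · rw [if_neg b1, if_pos b2] at heq
    exfalso
    refine b1 (key2 hab hv hR' hRle hRley h1 ?_)
    rw [heq]; exact h2
  · rw [if_neg b1, if_neg b2] at heq
    have := congrArg (fun z => Equiv.swap a b * z * Equiv.swap a b) heq
    simpa only [conj_conj] using this

lemma count_step (hab : a < b) (hv : x a < x b)
    (hR' : strictOn x w a.val b.val (x a).val (x b).val)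
    (hRle : Rle x w) (hRley : Rle (x * Equiv.swap a b) w) :
    (ASet (x * Equiv.swap a b) w).ncard + 1 ≤ (ASet x w).ncard := by
  classical
  have hmem : Equiv.swap a b ∈ ASet x w := (mem_ASet_iff hRle hab).mpr ⟨hab, hv, hR'⟩
  have h1 : (ASet (x * Equiv.swap a b) w).ncard ≤ (ASet x w \ {Equiv.swap a b}).ncard :=
    Set.ncard_le_ncard_of_injOn _ (psi_maps hab hv hR' hRle hRley)
      (psi_inj hab hv hR' hRle hRley) (Set.toFinite _)
  have h2 : (ASet x w \ {Equiv.swap a b}).ncard + 1 = (ASet x w).ncard :=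
    Set.ncard_diff_singleton_add_one hmem (Set.toFinite _)
  omega

end count

lemma rle_mul_of_strict {x w : Equiv.Perm (Fin n)} {c d : Fin n} (hcd : c < d)
    (hv : x c < x d) (hstrict : strictOn x w c.val d.val (x c).val (x d).val)
    (hRle : Rle x w) : Rle (x * Equiv.swap c d) w := by
  intro p q
  have heq := rk_mul_swap x hcd hv p q
  by_cases hcond : (c.val < p ∧ p ≤ d.val) ∧ ((x c).val < q ∧ q ≤ (x d).val)
  · have := hstrict p q hcond.1.1 hcond.1.2 hcond.2.1 hcond.2.2
    rw [if_pos hcond] at heq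
    omega
  · rw [if_neg hcond] at heq
    have := hRle p q
    omega

lemma deodhar {w : Equiv.Perm (Fin n)} :
    ∀ (m : ℕ) (x : Equiv.Perm (Fin n)), len w - len x = m → Rle x w →
      len w ≤ len x + (ASet x w).ncard := by
  intro m
  induction m using Nat.strong_induction_on with
  | _ m ih =>
    intro x hm hR
    by_cases hne : x = w
    · subst hne; omega
    · obtain ⟨c, d, hcd, hv, hnomid, hstrict⟩ := exists_step hR hne
      have hlenx : len x < len w :=
        len_lt_of_bruhatLE_ne (rle_to_bruhatLE (Msum x w) x rfl hR) hne
      have hcover : len (x * Equiv.swap c d) = len x + 1 := len_swap_cover hcd hv hnomid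
      have hRy : Rle (x * Equiv.swap c d) w := rle_mul_of_strict hcd hv hstrict hR
      have hcount := count_step hcd hv hstrict hR hRy
      have hIH := ih (len w - len (x * Equiv.swap c d)) (by omega) _ rfl hRy
      omega

end S16X

open S16X in
theorem stmt16 (n : ℕ) (x w : Equiv.Perm (Fin n)) (hxw : bruhatLE x w)
    (hsmooth : (Set.ncard {t : Equiv.Perm (Fin n) |
        IsTransposition t ∧ bruhatLT x (x * t) ∧ bruhatLE (x * t) w} : ℤ) =
      (len w : ℤ) - len x)
    (t' : Equiv.Perm (Fin n)) (ht' : IsTransposition t')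
    (hcov : bruhatLT x (x * t') ∧ len (x * t') = len x + 1)
    (ht'w : bruhatLE (x * t') w)
    (t : Equiv.Perm (Fin n)) (ht : IsTransposition t) (htne : t ≠ t')
    (htR : bruhatLT x (x * t) ∧ bruhatLE (x * t) w) :
    (bruhatLT (x * t') (x * t' * t) ∧ bruhatLE (x * t' * t) w) ∨
    (bruhatLT (x * t') (x * t' * (t' * t * t')) ∧ bruhatLE (x * t' * (t' * t * t')) w) := by
  classical
  have hRle : Rle x w := rle_of_bruhatLE hxw
  obtain ⟨a, b, hab, rfl⟩ := isTransposition_norm ht'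
  have hXG : XG x w a b := (xg_iff hRle hab).mp ⟨hcov.1, ht'w⟩
  obtain ⟨_, hv, hR'⟩ := hXG
  have hRley : Rle (x * Equiv.swap a b) w := rle_of_bruhatLE ht'w
  -- cardinalities
  have hsm : (Set.ncard (ASet x w) : ℤ) = (len w : ℤ) - len x := hsmooth
  have hdeo := deodhar (len w - len (x * Equiv.swap a b)) (x * Equiv.swap a b) rfl hRley
  have hlen1 : len (x * Equiv.swap a b) = len x + 1 := hcov.2
  have hmem : Equiv.swap a b ∈ ASet x w := (mem_ASet_iff hRle hab).mpr ⟨hab, hv, hR'⟩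
  have hdiff : (ASet x w \ {Equiv.swap a b}).ncard + 1 = (ASet x w).ncard :=
    Set.ncard_diff_singleton_add_one hmem (Set.toFinite _)
  have hcardle : (ASet x w \ {Equiv.swap a b}).ncard ≤ (ASet (x * Equiv.swap a b) w).ncard := by
    omega
  -- surjectivity of psi
  have htmem : t ∈ ASet x w \ {Equiv.swap a b} := ⟨⟨ht, htR.1, htR.2⟩, by simpa using htne⟩
  have hsurj := Set.surj_on_of_inj_on_of_ncard_le
    (s := ASet (x * Equiv.swap a b) w) (t := ASet x w \ {Equiv.swap a b})
    (fun s _ => if s ∈ ASet x w then s else Equiv.swap a b * s * Equiv.swap a b)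
    (fun s hs => psi_maps hab hv hR' hRle hRley s hs)
    (fun s1 s2 hs1 hs2 heq => psi_inj hab hv hR' hRle hRley hs1 hs2 heq)
    hcardle (Set.toFinite _)
  obtain ⟨s, hsmem, hfeq⟩ := hsurj t htmem
  by_cases hsx : s ∈ ASet x w
  · rw [if_pos hsx] at hfeq
    subst hfeq
    obtain ⟨_, hlt, hle⟩ := hsmem
    exact Or.inl ⟨hlt, hle⟩
  · rw [if_neg hsx] at hfeq
    have hseq : Equiv.swap a b * t * Equiv.swap a b = s := by
      rw [hfeq]; exact conj_conj a b s
    rw [← hseq] at hsmem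
    obtain ⟨_, hlt, hle⟩ := hsmem
    exact Or.inr ⟨hlt, hle⟩
end

section
/- If x ≤ w in S_n is a smooth pair (i.e., #{transpositions t : x < x·t ≤ w} = ℓ(w)−ℓ(x)), then for any x' with x ≤ x' ≤ w, the pair (w, x') is also smooth. -/
open Equiv

/-!
Write `N z` for the number of transpositions `t` with `z * t ≤ w`. For `z ≤ w`, every `t` with
`len (z * t) < len z` qualifies, and there are `len z` of them, so
`N z = len z + #{t | z < z * t ≤ w}`; in particular `N w = len w`, and smoothness of `(x, w)` says
`N x = len w`. The heart of the proof is that `N` is antitone on `[x, w]`: along a Bruhat edge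
`y < y * r ≤ w`, the map sending `t` to itself when `y * t ≤ w` and to `r * t * r` otherwise
injects the transpositions counted at `y * r` into those counted at `y`. Hence
`len w = N w ≤ N x' ≤ N x = len w`.

Everything about the Bruhat order is checked through Ehresmann's criterion
(`x ≤ w` iff `rk w ≤ rk x` pointwise), under which right multiplication by a transposition changes
`rk` by the indicator of a rectangle.
-/

open Finset

variable {n : ℕ}

lemma rk_eq_sum_s17 (y : Perm (Fin n)) (p q : ℕ) :
    (rk y p q : ℤ) = ∑ u : Fin n, if (u : ℕ) < p ∧ (y u : ℕ) < q then 1 else 0 := by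
  simp only [rk, Nat.add_one_le_iff]
  rw [card_filter]
  push_cast
  rfl

lemma rk_mul_swap (y : Perm (Fin n)) (a b : Fin n) (p q : ℕ) :
    (rk (y * swap a b) p q : ℤ) = rk y p q -
      ((if (a : ℕ) < p then 1 else 0) - (if (b : ℕ) < p then 1 else 0)) *
        ((if (y a : ℕ) < q then 1 else 0) - (if (y b : ℕ) < q then 1 else 0)) := by
  rcases eq_or_ne a b with rfl | hab
  · rw [swap_self, ← Perm.one_def, mul_one]
    simp
  have hreindex := Equiv.sum_comp (swap a b)
    fun u => if ((swap a b u : Fin n) : ℕ) < p ∧ (y u : ℕ) < q then (1 : ℤ) else 0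
  simp only [swap_apply_self] at hreindex
  rw [rk_eq_sum_s17, rk_eq_sum_s17, eq_sub_iff_add_eq, ← eq_sub_iff_add_eq', Perm.coe_mul,
    Function.comp_def, hreindex, ← sum_sub_distrib,
    Fintype.sum_eq_add a b hab fun u hu => by simp [swap_apply_of_ne_of_ne hu.1 hu.2]]
  simp only [swap_apply_left, swap_apply_right]
  split_ifs <;> omega

lemma rk_mul_swap_le_s17 {y : Perm (Fin n)} {i j : Fin n} (hij : i < j) (hv : y i < y j) (p q : ℕ) :
    rk (y * swap i j) p q ≤ rk y p q := by
  zify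
  rw [rk_mul_swap, sub_le_self_iff]
  rw [Fin.lt_def] at hij hv
  split_ifs <;> omega

lemma len_eq_sum (y : Perm (Fin n)) :
    (len y : ℤ) = ∑ v : Fin n, ((v : ℕ) - rk y v (y v) : ℤ) := by
  have hpos (v : Fin n) : ((v : ℕ) : ℤ) = ∑ u : Fin n, if u < v then 1 else 0 := by
    rw [← Fin.card_Iio, ← filter_gt_eq_Iio, card_filter]
    push_cast
    rfl
  have hterm (u v : Fin n) : (if u < v ∧ y v < y u then (1 : ℤ) else 0) =
      (if u < v then 1 else 0) - if (u : ℕ) < v ∧ (y u : ℕ) < y v then 1 else 0 := by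
    by_cases huv : u < v
    · have hne : y u ≠ y v := y.injective.ne huv.ne
      simp only [huv, true_and, if_true, ← Fin.lt_def]
      split_ifs <;> omega
    · simp [huv]
  simp only [len, card_filter, Nat.cast_sum, Fintype.sum_prod_type, Nat.cast_ite, Nat.cast_one,
    Nat.cast_zero]
  rw [sum_comm]
  simp only [hpos, rk_eq_sum_s17, ← sum_sub_distrib, hterm]

lemma one_le_dOf {y : Perm (Fin n)} {i j : Fin n} (hij : i < j) (hv : y i < y j) :
    1 ≤ dOf y (i, y i) (j, y j) := by
  rw [Fin.lt_def] at hij hv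
  simp only [dOf, rk_eq_sum_s17, ← sum_add_distrib, ← sum_sub_distrib]
  refine le_trans ?_ (single_le_sum (fun u _ => ?_) (mem_univ i))
  · simp [hij, hv]
  · split_ifs <;> omega

lemma len_lt_len_mul_swap_s17 {y : Perm (Fin n)} {i j : Fin n} (hij : i < j) (hv : y i < y j) :
    len y < len (y * swap i j) := by
  have hreindex := Equiv.sum_comp (swap i j) fun v => (rk (y * swap i j) v ((y * swap i j) v) : ℤ)
  simp only [Perm.mul_apply, swap_apply_self] at hreindex
  have hdrops := sum_le_sum fun v (_ : v ∈ univ) =>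
    Nat.cast_le (α := ℤ).2 (rk_mul_swap_le_s17 hij hv (swap i j v) (y v))
  rw [hreindex] at hdrops
  have hswapped : ∑ v : Fin n, (rk y (swap i j v) (y v) : ℤ) + dOf y (i, y i) (j, y j) =
      ∑ v : Fin n, (rk y v (y v) : ℤ) := by
    rw [← eq_sub_iff_add_eq', ← sum_sub_distrib, Fintype.sum_eq_add i j hij.ne
      fun v hv => by simp [swap_apply_of_ne_of_ne hv.1 hv.2], dOf]
    simp only [swap_apply_left, swap_apply_right]
    ring
  have hy := len_eq_sum y
  have hys := len_eq_sum (y * swap i j)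
  simp only [Perm.mul_apply] at hys
  rw [sum_sub_distrib] at hy hys
  have := one_le_dOf hij hv
  omega

lemma len_mul_swap_lt {y : Perm (Fin n)} {i j : Fin n} (hij : i < j) (hv : y j < y i) :
    len (y * swap i j) < len y := by
  simpa [mul_swap_mul_self] using len_lt_len_mul_swap_s17 (y := y * swap i j) hij (by simpa using hv)

lemma IsTransposition.exists_lt {t : Perm (Fin n)} (ht : IsTransposition t) :
    ∃ i j, i < j ∧ t = swap i j := by
  obtain ⟨a, b, hab, rfl⟩ := ht
  rcases lt_or_gt_of_ne hab with h | h
  · exact ⟨a, b, h, rfl⟩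
  · exact ⟨b, a, h, swap_comm a b⟩

lemma len_mul_ne {z t : Perm (Fin n)} (ht : IsTransposition t) : len (z * t) ≠ len z := by
  obtain ⟨i, j, hij, rfl⟩ := ht.exists_lt
  rcases lt_or_gt_of_ne (z.injective.ne hij.ne) with hv | hv
  · exact (len_lt_len_mul_swap_s17 hij hv).ne'
  · exact (len_mul_swap_lt hij hv).ne

lemma exists_swap_of_len_lt {z t : Perm (Fin n)} (ht : IsTransposition t)
    (hlen : len z < len (z * t)) : ∃ i j, i < j ∧ z i < z j ∧ t = swap i j := by
  obtain ⟨i, j, hij, rfl⟩ := ht.exists_lt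
  refine ⟨i, j, hij, (lt_or_gt_of_ne (z.injective.ne hij.ne)).resolve_right fun hv => ?_, rfl⟩
  exact (len_mul_swap_lt hij hv).not_gt hlen

lemma exists_swap_of_len_gt {z t : Perm (Fin n)} (ht : IsTransposition t)
    (hlen : len (z * t) < len z) : ∃ i j, i < j ∧ z j < z i ∧ t = swap i j := by
  obtain ⟨i, j, hij, rfl⟩ := ht.exists_lt
  refine ⟨i, j, hij, (lt_or_gt_of_ne (z.injective.ne hij.ne)).resolve_left fun hv => ?_, rfl⟩
  exact (len_lt_len_mul_swap_s17 hij hv).not_gt hlen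

lemma bruhatLE_mul_of_len_lt {z t : Perm (Fin n)} (ht : IsTransposition t)
    (hlen : len z < len (z * t)) : bruhatLE z (z * t) :=
  .single ⟨t, ht, rfl, hlen⟩

lemma bruhatLE_mul_of_len_gt {z t : Perm (Fin n)} (ht : IsTransposition t)
    (hlen : len (z * t) < len z) : bruhatLE (z * t) z := by
  obtain ⟨a, b, hab, rfl⟩ := ht
  exact .single ⟨swap a b, ⟨a, b, hab, rfl⟩, (mul_swap_mul_self a b z).symm, hlen⟩

lemma bruhatLE_mul_swap {y : Perm (Fin n)} {i j : Fin n} (hij : i < j) (hv : y i < y j) :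
    bruhatLE y (y * swap i j) :=
  bruhatLE_mul_of_len_lt ⟨i, j, hij.ne, rfl⟩ (len_lt_len_mul_swap_s17 hij hv)

lemma len_le_of_bruhatLE {x y : Perm (Fin n)} (h : bruhatLE x y) : len x ≤ len y := by
  induction h with
  | refl => exact le_rfl
  | tail _ hstep ih =>
    obtain ⟨t, -, rfl, hlen⟩ := hstep
    exact ih.trans hlen.le

section RankCriterion

variable {x w : Perm (Fin n)}

lemma rk_le_of_bruhatLE_s17 (h : bruhatLE x w) (p q : ℕ) : rk w p q ≤ rk x p q := by
  induction h with
  | refl => exact le_rfl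
  | tail _ hstep ih =>
    obtain ⟨t, ht, rfl, hlen⟩ := hstep
    obtain ⟨i, j, hij, hv, rfl⟩ := exists_swap_of_len_lt ht hlen
    exact (rk_mul_swap_le_s17 hij hv p q).trans ih

lemma exists_ne_forall_lt_eq (hxw : x ≠ w) : ∃ i, x i ≠ w i ∧ ∀ u < i, x u = w u := by
  have hex : {u | x u ≠ w u}.Nonempty := by
    by_contra! h
    exact hxw (Equiv.ext fun u => by simpa using Set.eq_empty_iff_forall_notMem.1 h u)
  obtain ⟨i, hi, hmin⟩ := wellFounded_lt.has_min _ hex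
  exact ⟨i, hi, fun u hu => not_not.1 fun h => hmin u h hu⟩

lemma apply_lt_of_rk_le (hdom : ∀ p q, rk w p q ≤ rk x p q) {i : Fin n}
    (hne : x i ≠ w i) (hpre : ∀ u < i, x u = w u) : x i < w i := by
  refine lt_of_le_of_ne (not_lt.1 fun hwx => (hdom (i + 1) (w i + 1)).not_gt ?_) hne
  zify
  rw [rk_eq_sum_s17, rk_eq_sum_s17]
  refine sum_lt_sum (fun u _ => ?_) ⟨i, mem_univ i, ?_⟩
  · rcases lt_trichotomy u i with hu | rfl | hu
    · rw [hpre u hu]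
    · split_ifs <;> omega
    · rw [Fin.lt_def] at hu
      split_ifs <;> omega
  · rw [Fin.lt_def] at hwx
    split_ifs <;> omega

lemma exists_gap_of_apply_lt {i : Fin n} (hlt : x i < w i) (hpre : ∀ u < i, x u = w u) :
    ∃ j, i < j ∧ x i ≤ w j ∧ w j < w i ∧ ∀ u, i < u → u < j → ¬ (x i ≤ w u ∧ w u < w i) := by
  have hex : {u | i < u ∧ x i ≤ w u ∧ w u < w i}.Nonempty := by
    refine ⟨w.symm (x i), ?_, by simp, by simpa using hlt⟩
    rcases lt_trichotomy (w.symm (x i)) i with h | h | h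
    · have := hpre _ h
      rw [apply_symm_apply] at this
      exact absurd (x.injective this) h.ne
    · have := congrArg w h
      rw [apply_symm_apply] at this
      exact absurd this hlt.ne
    · exact h
  obtain ⟨j, ⟨hij, hxj, hji⟩, hmin⟩ := wellFounded_lt.has_min _ hex
  exact ⟨j, hij, hxj, hji, fun u hiu huj hu => hmin u ⟨hiu, hu⟩ huj⟩

lemma rk_mul_swap_le_of_gap (hdom : ∀ p q, rk w p q ≤ rk x p q) {i j : Fin n}
    (hpre : ∀ u < i, x u = w u) (hij : i < j) (hxj : x i ≤ w j) (hji : w j < w i)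
    (hgap : ∀ u, i < u → u < j → ¬ (x i ≤ w u ∧ w u < w i)) (p q : ℕ) :
    rk (w * swap i j) p q ≤ rk x p q := by
  rw [Fin.lt_def] at hij hji
  rw [Fin.le_def] at hxj
  have := hdom p q
  zify at *
  rw [rk_mul_swap]
  by_cases hrect : i < p ∧ p ≤ j ∧ w j < q ∧ q ≤ w i
  swap
  · split_ifs <;> omega
  obtain ⟨hip, hpj, hjq, hqi⟩ := hrect
  -- Row `i` has a value of `x` in `[x i, q)` but none of `w`; rows in `(i, p)` have none of `w`
  -- there, by the choice of `j`; rows below `i` agree.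
  have hband : (rk w p q : ℤ) - rk w p (x i) + 1 ≤ rk x p q - rk x p (x i) := by
    rw [← Fintype.sum_ite_eq' i fun _ => (1 : ℤ)]
    simp only [rk_eq_sum_s17, ← sum_sub_distrib, ← sum_add_distrib]
    refine sum_le_sum fun u _ => ?_
    rcases lt_trichotomy u i with hu | rfl | hu
    · rw [hpre u hu, if_neg hu.ne]
      omega
    · split_ifs <;> omega
    · have hgapu := fun huj => hgap u hu huj
      rw [Fin.lt_def, Fin.le_def, Fin.lt_def] at *
      split_ifs <;> omega
  have := hdom p (x i)
  split_ifs <;> omega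

lemma bruhatLE_of_rk_le_s17 (hdom : ∀ p q, rk w p q ≤ rk x p q) : bruhatLE x w := by
  induction hl : len w using Nat.strong_induction_on generalizing w with
  | _ l ih =>
    rcases eq_or_ne x w with rfl | hxw
    · exact .refl
    obtain ⟨i, hne, hpre⟩ := exists_ne_forall_lt_eq hxw
    obtain ⟨j, hij, hxj, hji, hgap⟩ :=
      exists_gap_of_apply_lt (apply_lt_of_rk_le hdom hne hpre) hpre
    have hstep : bruhatLE (w * swap i j) w := by
      simpa [mul_swap_mul_self] using bruhatLE_mul_swap (y := w * swap i j) hij (by simpa using hji)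
    exact .trans (ih _ (hl ▸ len_mul_swap_lt hij hji)
      (rk_mul_swap_le_of_gap hdom hpre hij hxj hji hgap) rfl) hstep

end RankCriterion

-- The edges at `z` of the Bruhat graph of `[e, w]`, labelled by transpositions.
def bruhatEdges (w z : Perm (Fin n)) : Set (Perm (Fin n)) :=
  {t | IsTransposition t ∧ bruhatLE (z * t) w}

lemma ncard_transpositions_len_lt (z : Perm (Fin n)) :
    {t | IsTransposition t ∧ len (z * t) < len z}.ncard = len z := by
  have himage : {t | IsTransposition t ∧ len (z * t) < len z} =
      (fun p : Fin n × Fin n => swap p.1 p.2) '' {p | p.1 < p.2 ∧ z p.2 < z p.1} := by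
    ext t
    constructor
    · rintro ⟨ht, hlen⟩
      obtain ⟨i, j, hij, hv, rfl⟩ := exists_swap_of_len_gt ht hlen
      exact ⟨(i, j), ⟨hij, hv⟩, rfl⟩
    · rintro ⟨⟨a, b⟩, ⟨hab, hv⟩, rfl⟩
      exact ⟨⟨a, b, hab.ne, rfl⟩, len_mul_swap_lt hab hv⟩
  rw [himage, Set.InjOn.ncard_image, len, ← Set.ncard_coe_finset, coe_filter]
  · simp only [mem_univ, true_and]
  rintro ⟨a, b⟩ ⟨hab, -⟩ ⟨c, d⟩ ⟨hcd, -⟩ h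
  have ha := congrArg (· a) h
  have hb := congrArg (· b) h
  simp only [swap_apply_left, swap_apply_right, swap_apply_def] at ha hb
  rw [Fin.lt_def] at hab hcd
  ext <;> simp only [Fin.ext_iff] at * <;> split_ifs at ha hb <;> omega

lemma ncard_bruhatEdges {w z : Perm (Fin n)} (hz : bruhatLE z w) :
    (bruhatEdges w z).ncard =
      len z + {t | IsTransposition t ∧ bruhatLT z (z * t) ∧ bruhatLE (z * t) w}.ncard := by
  have hsplit : bruhatEdges w z = {t | IsTransposition t ∧ len (z * t) < len z} ∪
      {t | IsTransposition t ∧ bruhatLT z (z * t) ∧ bruhatLE (z * t) w} := by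
    ext t
    constructor
    · rintro ⟨ht, hle⟩
      rcases lt_or_gt_of_ne (len_mul_ne (z := z) ht) with hlen | hlen
      · exact .inl ⟨ht, hlen⟩
      · exact .inr ⟨ht, ⟨bruhatLE_mul_of_len_lt ht hlen, fun h => hlen.ne (h ▸ rfl)⟩, hle⟩
    · rintro (⟨ht, hlen⟩ | ⟨ht, -, hle⟩)
      · exact ⟨ht, (bruhatLE_mul_of_len_gt ht hlen).trans hz⟩
      · exact ⟨ht, hle⟩
  have hdisj : Disjoint {t | IsTransposition t ∧ len (z * t) < len z}
      {t | IsTransposition t ∧ bruhatLT z (z * t) ∧ bruhatLE (z * t) w} :=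
    Set.disjoint_left.2 fun _ ⟨_, hlen⟩ ⟨_, ⟨hle, _⟩, _⟩ => hlen.not_ge (len_le_of_bruhatLE hle)
  rw [hsplit, Set.ncard_union_eq hdisj, ncard_transpositions_len_lt]

lemma transpositions_bruhatLT_bruhatLE_self (w : Perm (Fin n)) :
    {t | IsTransposition t ∧ bruhatLT w (w * t) ∧ bruhatLE (w * t) w} = ∅ :=
  Set.eq_empty_of_forall_notMem fun _ ⟨ht, ⟨hle, _⟩, hge⟩ =>
    len_mul_ne ht (le_antisymm (len_le_of_bruhatLE hge) (len_le_of_bruhatLE hle))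

lemma IsTransposition.eq_swap_cases {t : Perm (Fin n)} (ht : IsTransposition t) (i j : Fin n) :
    t = swap i j ∨ (∃ c, c ≠ i ∧ c ≠ j ∧ t = swap c i) ∨ (∃ c, c ≠ i ∧ c ≠ j ∧ t = swap c j) ∨
      ∃ a b, a ≠ i ∧ a ≠ j ∧ b ≠ i ∧ b ≠ j ∧ t = swap a b := by
  obtain ⟨a, b, hab, rfl⟩ := ht
  rcases eq_or_ne a i with rfl | hai
  · rcases eq_or_ne b j with rfl | hbj
    · exact .inl rfl
    · exact .inr (.inl ⟨b, hab.symm, hbj, swap_comm _ _⟩)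
  rcases eq_or_ne a j with rfl | haj
  · rcases eq_or_ne b i with rfl | hbi
    · exact .inl (swap_comm _ _)
    · exact .inr (.inr (.inl ⟨b, hbi, hab.symm, swap_comm _ _⟩))
  rcases eq_or_ne b i with rfl | hbi
  · exact .inr (.inl ⟨a, hai, haj, rfl⟩)
  rcases eq_or_ne b j with rfl | hbj
  · exact .inr (.inr (.inl ⟨a, hai, haj, rfl⟩))
  exact .inr (.inr (.inr ⟨a, b, hai, haj, hbi, hbj, rfl⟩))

section Exchange

/-! Throughout, `y < y * swap i j ≤ w`. In the `_or` lemmas the alternative that holds is decided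
by the relative order of the indices and of their `y`-values alone, not by `w`; once it is chosen,
the required rank inequality follows pointwise from the hypotheses. -/

variable {w y : Perm (Fin n)} {i j : Fin n}

lemma bruhatLE_mul_swap_of_disjoint (hij : i < j) (hv : y i < y j)
    (hyr : bruhatLE (y * swap i j) w) {a b : Fin n} (hai : a ≠ i) (haj : a ≠ j) (hbi : b ≠ i)
    (hbj : b ≠ j) (hrt : bruhatLE (y * swap i j * swap a b) w) : bruhatLE (y * swap a b) w := by
  refine bruhatLE_of_rk_le_s17 fun p q => ?_
  have h1 := rk_le_of_bruhatLE_s17 hyr p q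
  have h2 := rk_le_of_bruhatLE_s17 hrt p q
  rw [Fin.lt_def] at hij hv
  zify at h1 h2 ⊢
  simp only [rk_mul_swap, Perm.mul_apply, swap_apply_of_ne_of_ne hai haj,
    swap_apply_of_ne_of_ne hbi hbj] at h1 h2 ⊢
  split_ifs at h1 h2 ⊢ <;> omega

lemma bruhatLE_mul_swap_left_or (hij : i < j) (hv : y i < y j)
    (hyr : bruhatLE (y * swap i j) w) {c : Fin n} (hci : c ≠ i) (hcj : c ≠ j)
    (hrt : bruhatLE (y * swap i j * swap c i) w) :
    bruhatLE (y * swap c i) w ∨ bruhatLE (y * swap j c) w := by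
  rw [Fin.lt_def] at hij hv
  by_cases hright : (j : ℕ) < c ∧ (y i : ℕ) < y c
  on_goal 1 => right
  on_goal 2 => left
  all_goals
    refine bruhatLE_of_rk_le_s17 fun p q => ?_
    have h1 := rk_le_of_bruhatLE_s17 hyr p q
    have h2 := rk_le_of_bruhatLE_s17 hrt p q
    zify at h1 h2 ⊢
    simp only [rk_mul_swap, Perm.mul_apply, swap_apply_left, swap_apply_of_ne_of_ne hci hcj]
      at h1 h2 ⊢
    split_ifs at h1 h2 ⊢ <;> omega

lemma bruhatLE_mul_swap_right_or (hij : i < j) (hv : y i < y j)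
    (hyr : bruhatLE (y * swap i j) w) {c : Fin n} (hci : c ≠ i) (hcj : c ≠ j)
    (hrt : bruhatLE (y * swap i j * swap c j) w) :
    bruhatLE (y * swap c j) w ∨ bruhatLE (y * swap i c) w := by
  rw [Fin.lt_def] at hij hv
  by_cases hright : (c : ℕ) < i ∧ (y c : ℕ) < y j
  on_goal 1 => right
  on_goal 2 => left
  all_goals
    refine bruhatLE_of_rk_le_s17 fun p q => ?_
    have h1 := rk_le_of_bruhatLE_s17 hyr p q
    have h2 := rk_le_of_bruhatLE_s17 hrt p q
    zify at h1 h2 ⊢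
    simp only [rk_mul_swap, Perm.mul_apply, swap_apply_right, swap_apply_of_ne_of_ne hci hcj]
      at h1 h2 ⊢
    split_ifs at h1 h2 ⊢ <;> omega

lemma bruhatLE_mul_swap_left_of (hij : i < j) (hv : y i < y j)
    (hyr : bruhatLE (y * swap i j) w) {c : Fin n} (hci : c ≠ i) (hcj : c ≠ j)
    (hrt : bruhatLE (y * swap i j * swap c i) w) (hrtr : bruhatLE (y * swap j c) w)
    (htr : bruhatLE (y * swap c i * swap i j) w) : bruhatLE (y * swap c i) w := by
  refine bruhatLE_of_rk_le_s17 fun p q => ?_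
  have h1 := rk_le_of_bruhatLE_s17 hyr p q
  have h2 := rk_le_of_bruhatLE_s17 hrt p q
  have h3 := rk_le_of_bruhatLE_s17 hrtr p q
  have h4 := rk_le_of_bruhatLE_s17 htr p q
  zify at h1 h2 h3 h4 ⊢
  simp only [rk_mul_swap, Perm.mul_apply, swap_apply_left, swap_apply_right,
    swap_apply_of_ne_of_ne hci hcj, swap_apply_of_ne_of_ne hcj.symm hij.ne'] at h1 h2 h3 h4 ⊢
  rw [Fin.lt_def] at hij hv
  split_ifs at h1 h2 h3 h4 ⊢ <;> omega

lemma bruhatLE_mul_swap_right_of (hij : i < j) (hv : y i < y j)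
    (hyr : bruhatLE (y * swap i j) w) {c : Fin n} (hci : c ≠ i) (hcj : c ≠ j)
    (hrt : bruhatLE (y * swap i j * swap c j) w) (hrtr : bruhatLE (y * swap i c) w)
    (htr : bruhatLE (y * swap c j * swap i j) w) : bruhatLE (y * swap c j) w := by
  refine bruhatLE_of_rk_le_s17 fun p q => ?_
  have h1 := rk_le_of_bruhatLE_s17 hyr p q
  have h2 := rk_le_of_bruhatLE_s17 hrt p q
  have h3 := rk_le_of_bruhatLE_s17 hrtr p q
  have h4 := rk_le_of_bruhatLE_s17 htr p q
  zify at h1 h2 h3 h4 ⊢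
  simp only [rk_mul_swap, Perm.mul_apply, swap_apply_right, swap_apply_of_ne_of_ne hci hcj,
    swap_apply_of_ne_of_ne hci.symm hij.ne] at h1 h2 h3 h4 ⊢
  rw [Fin.lt_def] at hij hv
  split_ifs at h1 h2 h3 h4 ⊢ <;> omega

lemma bruhatLE_mul_or_bruhatLE_mul_conj (hij : i < j) (hv : y i < y j)
    (hyr : bruhatLE (y * swap i j) w) {t : Perm (Fin n)} (ht : IsTransposition t)
    (hrt : bruhatLE (y * swap i j * t) w) :
    bruhatLE (y * t) w ∨ bruhatLE (y * (swap i j * t * swap i j)) w := by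
  rcases ht.eq_swap_cases i j with rfl | ⟨c, hci, hcj, rfl⟩ | ⟨c, hci, hcj, rfl⟩ |
    ⟨a, b, hai, haj, hbi, hbj, rfl⟩
  · exact .inl hyr
  · rw [swap_mul_swap_mul_swap hci hcj]
    exact bruhatLE_mul_swap_left_or hij hv hyr hci hcj hrt
  · rw [swap_comm i j, swap_mul_swap_mul_swap hcj hci]
    exact bruhatLE_mul_swap_right_or hij hv hyr hci hcj hrt
  · exact .inl (bruhatLE_mul_swap_of_disjoint hij hv hyr hai haj hbi hbj hrt)

lemma bruhatLE_mul_of_bruhatLE_mul_conj (hij : i < j) (hv : y i < y j)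
    (hyr : bruhatLE (y * swap i j) w) {t : Perm (Fin n)} (ht : IsTransposition t)
    (hrt : bruhatLE (y * swap i j * t) w) (hrtr : bruhatLE (y * (swap i j * t * swap i j)) w)
    (htr : bruhatLE (y * t * swap i j) w) : bruhatLE (y * t) w := by
  rcases ht.eq_swap_cases i j with rfl | ⟨c, hci, hcj, rfl⟩ | ⟨c, hci, hcj, rfl⟩ |
    ⟨a, b, hai, haj, hbi, hbj, rfl⟩
  · exact hyr
  · rw [swap_mul_swap_mul_swap hci hcj] at hrtr
    exact bruhatLE_mul_swap_left_of hij hv hyr hci hcj hrt hrtr htr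
  · rw [swap_comm i j, swap_mul_swap_mul_swap hcj hci] at hrtr
    exact bruhatLE_mul_swap_right_of hij hv hyr hci hcj hrt hrtr htr
  · exact bruhatLE_mul_swap_of_disjoint hij hv hyr hai haj hbi hbj hrt

lemma ncard_bruhatEdges_mul_swap_le (hij : i < j) (hv : y i < y j)
    (hyr : bruhatLE (y * swap i j) w) :
    (bruhatEdges w (y * swap i j)).ncard ≤ (bruhatEdges w y).ncard := by
  classical
  refine Set.ncard_le_ncard_of_injOn
    (fun t => if bruhatLE (y * t) w then t else swap i j * t * swap i j) ?_ ?_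
  · rintro t ⟨ht, hrt⟩
    split_ifs with hyt
    · exact ⟨ht, hyt⟩
    · refine ⟨?_, (bruhatLE_mul_or_bruhatLE_mul_conj hij hv hyr ht hrt).resolve_left hyt⟩
      obtain ⟨a, b, hab, rfl⟩ := ht
      exact ⟨_, _, (swap i j).injective.ne hab, by rw [swap_apply_apply, swap_inv]⟩
  · rintro t₁ ⟨ht₁, hrt₁⟩ t₂ ⟨ht₂, hrt₂⟩ heq
    dsimp only at heq
    split_ifs at heq with h₁ h₂ h₂
    · exact heq
    · subst heq
      refine absurd (bruhatLE_mul_of_bruhatLE_mul_conj hij hv hyr ht₂ hrt₂ h₁ ?_) h₂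
      simpa [mul_assoc] using hrt₁
    · subst heq
      refine absurd (bruhatLE_mul_of_bruhatLE_mul_conj hij hv hyr ht₁ hrt₁ h₂ ?_) h₁
      simpa [mul_assoc] using hrt₂
    · exact mul_left_cancel (mul_right_cancel heq)

end Exchange

lemma ncard_bruhatEdges_antitone {w z z' : Perm (Fin n)} (hzz' : bruhatLE z z')
    (hz'w : bruhatLE z' w) : (bruhatEdges w z').ncard ≤ (bruhatEdges w z).ncard := by
  induction hzz' with
  | refl => exact le_rfl
  | tail _ hstep ih =>
    obtain ⟨t, ht, rfl, hlen⟩ := hstep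
    obtain ⟨i, j, hij, hv, rfl⟩ := exists_swap_of_len_lt ht hlen
    exact (ncard_bruhatEdges_mul_swap_le hij hv hz'w).trans
      (ih ((bruhatLE_mul_swap hij hv).trans hz'w))

theorem stmt17 (n : ℕ) (x w : Equiv.Perm (Fin n)) (hxw : bruhatLE x w)
    (hsmooth : (Set.ncard {t : Equiv.Perm (Fin n) |
        IsTransposition t ∧ bruhatLT x (x * t) ∧ bruhatLE (x * t) w} : ℤ) =
      (len w : ℤ) - len x) :
    ∀ x' : Equiv.Perm (Fin n), bruhatLE x x' → bruhatLE x' w →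
      (Set.ncard {t : Equiv.Perm (Fin n) |
          IsTransposition t ∧ bruhatLT x' (x' * t) ∧ bruhatLE (x' * t) w} : ℤ) =
        (len w : ℤ) - len x' := by
  intro x' hxx' hx'w
  have hx := ncard_bruhatEdges hxw
  have hx' := ncard_bruhatEdges hx'w
  have hw := ncard_bruhatEdges (.refl : bruhatLE w w)
  rw [transpositions_bruhatLT_bruhatLE_self, Set.ncard_empty] at hw
  have hxx'_le := ncard_bruhatEdges_antitone hxx' hx'w
  have hx'w_le := ncard_bruhatEdges_antitone hx'w .refl
  omega
end
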